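/- arXiv:2112.14758 — 6 statements merged into one kernel-verified Lean document; each statement's English description precedes it below -/
import Mathlib

section
/- Let k ≥ 0 and d ≥ 1 be integers, N > k+1, and n = N^d. The null space of the KTF penalty matrix D_{n,d}^{(k+1)} has dimension (k+1)^d, and it is spanned by the vectors p ∈ ℝ^n with components p(x) = x_1^{a_1} x_2^{a_2} ⋯ x_d^{a_d} for x ∈ Z_{n,d}, ranging over all exponents a_1, …, a_d ∈ {0, 1, …, k} (i.e., by evaluations on the lattice of monomials of maximum degree k). -/
open scoped BigOperators ENNReal NNReal
open MeasureTheory ProbabilityTheory Matrix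

noncomputable section

/-- Univariate forward difference matrix `D^{(1)}_M ∈ ℝ^{(M-1)×M}`, with entries
`(D^{(1)}_M)_{i,i} = -1`, `(D^{(1)}_M)_{i,i+1} = 1` and `0` otherwise. -/
def D1 (M : ℕ) : Matrix (Fin (M - 1)) (Fin M) ℝ :=
  Matrix.of fun i j => if (j : ℕ) = (i : ℕ) then -1 else if (j : ℕ) = (i : ℕ) + 1 then 1 else 0

/-- Univariate difference operator of order `m` on `N` points:
`D^{(0)}_N = I_N` and `D^{(m+1)}_N = D^{(1)}_{N-m} D^{(m)}_N`.  In particular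
`Dop N (k+1)` is the operator `D_N^{(k+1)} ∈ ℝ^{(N-k-1) × N}`. -/
def Dop (N : ℕ) : (m : ℕ) → Matrix (Fin (N - m)) (Fin N) ℝ
  | 0 => Matrix.of fun i j => if (i : ℕ) = (j : ℕ) then 1 else 0
  | m + 1 => D1 (N - m) * Dop N m

/-- Row index type of the order-`m` KTF penalty matrix: a coordinate direction `j`,
a row index of the univariate operator, and the values of the other `d-1` lattice
coordinates. -/
abbrev KtfIdx (N d m : ℕ) :=
  Σ j : Fin d, Fin (N - m) × ({l : Fin d // l ≠ j} → Fin N)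

/-- Order-`m` KTF penalty matrix on the lattice `{1,…,N}^d`: the vertical block
concatenation over coordinate directions `j` of `I_N ⊗ ⋯ ⊗ D^{(m)}_N ⊗ ⋯ ⊗ I_N`
(`D^{(m)}_N` in the `j`-th factor). -/
def ktfMat (N d m : ℕ) : Matrix (KtfIdx N d m) (Fin d → Fin N) ℝ :=
  Matrix.of fun p x =>
    Dop N m p.2.1 (x p.1) *
      ∏ l : {l : Fin d // l ≠ p.1}, (if p.2.2 l = x l.1 then (1:ℝ) else 0)

/-- forward difference on ℕ-indexed sequences -/
def dif (f : ℕ → ℝ) : ℕ → ℝ := fun t => f (t + 1) - f t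

lemma dif_iter_congr (m : ℕ) : ∀ (f g : ℕ → ℝ) (i : ℕ),
    (∀ t, i ≤ t → t ≤ i + m → f t = g t) → dif^[m] f i = dif^[m] g i := by
  induction m with
  | zero => intro f g i h; simpa using h i le_rfl (by omega)
  | succ m ih =>
    intro f g i h
    rw [Function.iterate_succ_apply, Function.iterate_succ_apply]
    exact ih _ _ i (fun t ht1 ht2 => by
      simp only [dif]; rw [h t (by omega) (by omega), h (t+1) (by omega) (by omega)])

lemma D1_mulVec (M : ℕ) (w : Fin M → ℝ) (i : Fin (M - 1)) :
    (D1 M *ᵥ w) i = w ⟨(i : ℕ) + 1, by omega⟩ - w ⟨(i : ℕ), by omega⟩ := by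
  have hi := i.isLt
  simp only [mulVec, dotProduct, D1, Matrix.of_apply]
  have key : ∀ j : Fin M,
      (if (j : ℕ) = (i : ℕ) then (-1:ℝ) else if (j : ℕ) = (i : ℕ) + 1 then 1 else 0) * w j
      = (if j = (⟨(i : ℕ) + 1, by omega⟩ : Fin M) then w j else 0)
        - (if j = (⟨(i : ℕ), by omega⟩ : Fin M) then w j else 0) := by
    intro j
    simp only [Fin.ext_iff]
    split_ifs <;> (first | ring1 | (exfalso; omega))
  rw [Finset.sum_congr rfl (fun j _ => key j), Finset.sum_sub_distrib]
  rw [Finset.sum_ite_eq' Finset.univ _ w, Finset.sum_ite_eq' Finset.univ _ w]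
  simp

/-- extension of a vector on `Fin N` to `ℕ` by zero -/
def zext (N : ℕ) (v : Fin N → ℝ) : ℕ → ℝ := fun t => if h : t < N then v ⟨t, h⟩ else 0

lemma dop_mulVec (N : ℕ) : ∀ (m : ℕ) (v : Fin N → ℝ) (i : Fin (N - m)),
    (Dop N m *ᵥ v) i = dif^[m] (zext N v) (i : ℕ) := by
  intro m
  induction m with
  | zero =>
    intro v i
    have hi : (i : ℕ) < N := by have := i.isLt; omega
    simp only [Dop, mulVec, dotProduct, Matrix.of_apply, Function.iterate_zero, id]
    have key : ∀ j : Fin N, (if (i : ℕ) = (j : ℕ) then (1:ℝ) else 0) * v j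
        = if j = (⟨(i : ℕ), hi⟩ : Fin N) then v j else 0 := by
      intro j; simp only [Fin.ext_iff]; split_ifs <;> (first | ring1 | (exfalso; omega))
    rw [Finset.sum_congr rfl (fun j _ => key j), Finset.sum_ite_eq' Finset.univ _ v]
    simp [zext, hi]
  | succ m ih =>
    intro v i
    have hi := i.isLt
    have h1 : (i : ℕ) < N - m - 1 := by omega
    have : (Dop N (m+1) *ᵥ v) i = (D1 (N - m) *ᵥ (Dop N m *ᵥ v)) ⟨(i:ℕ), h1⟩ := by
      rw [show Dop N (m+1) = D1 (N - m) * Dop N m from rfl, ← mulVec_mulVec]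
      rfl
    rw [this, D1_mulVec]
    rw [ih v ⟨(i:ℕ)+1, by omega⟩, ih v ⟨(i:ℕ), by omega⟩]
    rw [Function.iterate_succ_apply']
    rfl


lemma dif_zero_prop : ∀ (m : ℕ) (f : ℕ → ℝ) (T : ℕ),
    (∀ i, i + m < T → dif^[m] f i = 0) → (∀ t, t < m → f t = 0) → ∀ t, t < T → f t = 0 := by
  intro m
  induction m with
  | zero => intro f T h1 _ t ht; simpa using h1 t ht
  | succ m ih =>
    intro f T h1 h2 t ht
    have hg : ∀ s, s < T - 1 → dif f s = 0 := by
      apply ih (dif f) (T - 1)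
      · intro i hi
        have := h1 i (by omega)
        rwa [Function.iterate_succ_apply] at this
      · intro s hs
        simp only [dif]
        rw [h2 s (by omega), h2 (s+1) (by omega)]; ring
    -- now f vanishes up to T by induction
    clear h1 ih
    induction t with
    | zero => exact h2 0 (by omega)
    | succ s ihs =>
      by_cases hsm : s + 1 < m + 1
      · exact h2 _ hsm
      · have hfs : f s = 0 := ihs (by omega)
        have := hg s (by omega)
        simp only [dif] at this
        linarith

open Polynomial in
lemma dif_iter_poly (c : ℝ) : ∀ (m : ℕ) (q : ℝ[X]), q.natDegree < m →
    ∀ t : ℕ, dif^[m] (fun t : ℕ => q.eval ((t : ℝ) * c)) t = 0 := by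
  intro m
  induction m with
  | zero => intro q hq; omega
  | succ m ih =>
    intro q hq t
    rw [Function.iterate_succ_apply]
    have hd : dif (fun t : ℕ => q.eval ((t : ℝ) * c)) =
        fun t : ℕ => (q.comp (X + C c) - q).eval ((t : ℝ) * c) := by
      funext s
      simp only [dif, eval_sub, eval_comp, eval_add, eval_X, eval_C]
      push_cast
      ring_nf
    rw [hd]
    set r := q.comp (X + C c) - q with hr
    by_cases hr0 : r = 0
    · rw [hr0]
      simp only [eval_zero]
      have hz : dif^[m] (fun _ : ℕ => (0:ℝ)) = fun _ => 0 :=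
        Function.iterate_fixed (by funext s; simp [dif]) m
      exact congrFun hz t
    · apply ih
      by_cases hq0 : q.natDegree = 0
      · exfalso
        obtain ⟨a, rfl⟩ := natDegree_eq_zero.mp hq0
        simp [hr] at hr0
      · have hq0' : q ≠ 0 := fun h => hq0 (by simp [h])
        have hlc : (q.comp (X + C c)).leadingCoeff = q.leadingCoeff := by
          rw [leadingCoeff_comp (by simp [natDegree_X_add_C])]
          simp [leadingCoeff_X_add_C]
        have hcomp0 : q.comp (X + C c) ≠ 0 := by
          intro h
          apply hq0'
          rw [← leadingCoeff_eq_zero, ← hlc, h, leadingCoeff_zero]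
        have hdc : (q.comp (X + C c)).degree = q.degree := by
          rw [degree_eq_natDegree hcomp0, degree_eq_natDegree hq0', natDegree_comp,
            natDegree_X_add_C, mul_one]
        have hdeg : r.degree < q.degree := by
          rw [hr, ← hdc]
          apply degree_sub_lt hdc hcomp0
          rw [leadingCoeff_comp (by simp [natDegree_X_add_C])]
          simp [leadingCoeff_X_add_C]
        have : r.natDegree < q.natDegree := by
          apply natDegree_lt_natDegree hr0 hdeg
        omega

open Polynomial in
lemma dop_poly (N k : ℕ) (hN : k + 1 < N) (q : ℝ[X]) (hq : q.natDegree ≤ k) :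
    Dop N (k+1) *ᵥ (fun s : Fin N => q.eval (((s : ℕ) + 1 : ℝ) / N)) = 0 := by
  funext i
  have hi := i.isLt
  rw [dop_mulVec]
  set q' := q.comp (X + C ((1:ℝ)/N)) with hq'
  have hdeg : q'.natDegree < k + 1 := by
    rw [hq', natDegree_comp, natDegree_X_add_C, mul_one]; omega
  have hagree : dif^[k+1] (zext N (fun s : Fin N => q.eval (((s : ℕ) + 1 : ℝ) / N))) (i : ℕ)
      = dif^[k+1] (fun t : ℕ => q'.eval ((t : ℝ) * (1/N))) (i : ℕ) := by
    apply dif_iter_congr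
    intro t ht1 ht2
    have htN : t < N := by omega
    simp only [zext, htN, dif_pos, eval_comp, eval_add, eval_X, eval_C]
    rw [show (((t:ℕ):ℝ)+1)/N = ((t:ℕ):ℝ)*(1/N)+1/N by ring, hq', eval_comp, eval_add,
      eval_X, eval_C]
  rw [hagree, dif_iter_poly (1/N) (k+1) q' hdeg]
  simp

lemma dop_ker_vanish (N k : ℕ) (hN : k + 1 < N) (u : Fin N → ℝ)
    (hker : Dop N (k+1) *ᵥ u = 0) (h0 : ∀ s : Fin N, (s : ℕ) ≤ k → u s = 0) : u = 0 := by
  have main : ∀ t, t < N → zext N u t = 0 := by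
    apply dif_zero_prop (k+1) (zext N u) N
    · intro i hi
      have hi' : i < N - (k+1) := by omega
      have := congrFun hker ⟨i, hi'⟩
      rw [dop_mulVec] at this
      simpa using this
    · intro t ht
      have htN : t < N := by omega
      simp only [zext, htN, dif_pos]
      exact h0 ⟨t, htN⟩ (by simpa using Nat.lt_succ_iff.mp ht)
  funext s
  have := main s s.isLt
  simpa [zext, s.isLt] using this

def ins (d N : ℕ) (j : Fin d) (y : {l : Fin d // l ≠ j} → Fin N) (s : Fin N) : Fin d → Fin N :=
  fun l => if h : l = j then s else y ⟨l, h⟩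

lemma ins_self (d N : ℕ) (j : Fin d) (y : {l : Fin d // l ≠ j} → Fin N) (s : Fin N) :
    ins d N j y s j = s := by simp [ins]

lemma ins_ne (d N : ℕ) (j : Fin d) (y : {l : Fin d // l ≠ j} → Fin N) (s : Fin N)
    (l : Fin d) (h : l ≠ j) : ins d N j y s l = y ⟨l, h⟩ := by simp [ins, h]

lemma prod_ind {d : ℕ} {N : ℕ} {j : Fin d} (y w : {l : Fin d // l ≠ j} → Fin N) :
    (∏ l : {l : Fin d // l ≠ j}, if y l = w l then (1:ℝ) else 0)
      = if w = y then 1 else 0 := by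
  by_cases h : w = y
  · subst h; simp
  · rw [if_neg h]
    obtain ⟨l, hl⟩ : ∃ l, y l ≠ w l := by
      by_contra hc
      push_neg at hc
      exact h (funext fun l => (hc l).symm)
    exact Finset.prod_eq_zero (Finset.mem_univ l) (by rw [if_neg hl])

lemma ktf_mulVec (N d m : ℕ) (v : (Fin d → Fin N) → ℝ) (j : Fin d) (i : Fin (N - m))
    (y : {l : Fin d // l ≠ j} → Fin N) :
    (ktfMat N d m *ᵥ v) ⟨j, (i, y)⟩ = (Dop N m *ᵥ fun s => v (ins d N j y s)) i := by
  classical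
  simp only [mulVec, dotProduct, ktfMat, Matrix.of_apply]
  rw [← Equiv.sum_comp (Equiv.piSplitAt j (fun _ : Fin d => Fin N)).symm]
  rw [Fintype.sum_prod_type]
  have e_eq : ∀ (s : Fin N) (w : {l : Fin d // l ≠ j} → Fin N),
      (Equiv.piSplitAt j (fun _ : Fin d => Fin N)).symm (s, w) = ins d N j w s := by
    intro s w
    funext l
    simp only [Equiv.piSplitAt_symm_apply, ins]
    split_ifs with h
    · subst h; rfl
    · rfl
  apply Finset.sum_congr rfl
  intro s _
  have step : ∀ w : {l : Fin d // l ≠ j} → Fin N,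
      Dop N m i ((Equiv.piSplitAt j (fun _ : Fin d => Fin N)).symm (s, w) j) *
        (∏ l : {l : Fin d // l ≠ j},
          if y l = (Equiv.piSplitAt j (fun _ : Fin d => Fin N)).symm (s, w) l.1 then (1:ℝ) else 0) *
        v ((Equiv.piSplitAt j (fun _ : Fin d => Fin N)).symm (s, w))
      = if w = y then Dop N m i s * v (ins d N j y s) else 0 := by
    intro w
    rw [e_eq s w]
    have h1 : ∀ l : {l : Fin d // l ≠ j}, ins d N j w s l.1 = w l := by
      intro l
      rw [ins_ne d N j w s l.1 l.2]
    simp only [ins_self, h1]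
    rw [prod_ind y w]
    by_cases h : w = y
    · subst h; simp
    · simp [h]
  rw [Finset.sum_congr rfl (fun w _ => step w), Finset.sum_ite_eq' Finset.univ y]
  simp

lemma ktf_vanish (N d k : ℕ) (hN : k + 1 < N) (v : (Fin d → Fin N) → ℝ)
    (hv : ktfMat N d (k+1) *ᵥ v = 0)
    (hbox : ∀ x : Fin d → Fin N, (∀ l, (x l : ℕ) ≤ k) → v x = 0) : v = 0 := by
  have main : ∀ r, ∀ x : Fin d → Fin N, (∀ l : Fin d, r ≤ (l : ℕ) → (x l : ℕ) ≤ k) → v x = 0 := by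
    intro r
    induction r with
    | zero => intro x hx; exact hbox x fun l => hx l (Nat.zero_le _)
    | succ r ih =>
      intro x hx
      by_cases hrd : r < d
      · set j : Fin d := ⟨r, hrd⟩ with hj
        set y : {l : Fin d // l ≠ j} → Fin N := fun l => x l.1 with hy
        have hsmall : ∀ s : Fin N, (s : ℕ) ≤ k → v (ins d N j y s) = 0 := by
          intro s hs
          apply ih
          intro l hl
          by_cases h : l = j
          · subst h; rw [ins_self]; exact hs
          · rw [ins_ne d N j y s l h]
            apply hx l
            have : (l : ℕ) ≠ r := fun hc => h (Fin.ext (by simp [hj, hc]))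
            omega
        have hker_u : Dop N (k+1) *ᵥ (fun s => v (ins d N j y s)) = 0 := by
          funext i
          rw [← ktf_mulVec N d (k+1) v j i y, hv]
          rfl
        have hzero := dop_ker_vanish N k hN _ hker_u hsmall
        have hxins : ins d N j y (x j) = x := by
          funext l
          by_cases h : l = j
          · subst h; exact ins_self d N j y (x j)
          · rw [ins_ne d N j y (x j) l h]
        calc v x = v (ins d N j y (x j)) := by rw [hxins]
        _ = 0 := congrFun hzero (x j)
      · exact ih x fun l hl => hx l (by have := l.isLt; omega)
  funext x
  exact main d x fun l hl => absurd l.isLt (by omega)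

lemma prod_split {d : ℕ} (j : Fin d) (f : Fin d → ℝ) :
    ∏ l, f l = f j * ∏ l : {l : Fin d // l ≠ j}, f l.1 := by
  rw [Fintype.prod_eq_mul_prod_compl j f]
  congr 1
  exact Finset.prod_subtype ({j}ᶜ : Finset (Fin d)) (fun x => by simp) f

lemma prod_if_eq {ι β : Type*} [Fintype ι] [DecidableEq β] (x y : ι → β) :
    (∏ j, if x j = y j then (1:ℝ) else 0) = if x = y then 1 else 0 := by
  by_cases h : x = y
  · subst h; simp
  · rw [if_neg h]
    obtain ⟨l, hl⟩ : ∃ l, x l ≠ y l := by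
      by_contra hc
      push_neg at hc
      exact h (funext hc)
    exact Finset.prod_eq_zero (Finset.mem_univ l) (by rw [if_neg hl])

def Vm (N k : ℕ) : Matrix (Fin (k+1)) (Fin (k+1)) ℝ :=
  Matrix.vandermonde fun s : Fin (k+1) => (((s : ℕ) + 1 : ℝ) / N)

lemma Vm_det_ne_zero (N k : ℕ) (hN : k + 1 < N) : (Vm N k).det ≠ 0 := by
  have hN0 : (N : ℝ) ≠ 0 := Nat.cast_ne_zero.mpr (by omega)
  rw [Vm, Matrix.det_vandermonde]
  apply Finset.prod_ne_zero_iff.mpr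
  intro i _
  apply Finset.prod_ne_zero_iff.mpr
  intro l hl
  have hil : i < l := Finset.mem_Ioi.mp hl
  apply sub_ne_zero.mpr
  intro hc
  rw [div_eq_div_iff hN0 hN0] at hc
  have h2 := mul_right_cancel₀ hN0 hc
  have h3 : ((l : ℕ) : ℝ) = ((i : ℕ) : ℝ) := by linarith
  have : (l : ℕ) = (i : ℕ) := by exact_mod_cast h3
  omega

lemma kron_mul {k : ℕ} {d : ℕ} (M M' : Matrix (Fin (k+1)) (Fin (k+1)) ℝ)
    (x y : Fin d → Fin (k+1)) :
    ∑ c : Fin d → Fin (k+1), (∏ j, M (x j) (c j)) * (∏ j, M' (c j) (y j))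
      = ∏ j, (M * M') (x j) (y j) := by
  simp only [Matrix.mul_apply]
  rw [Fintype.prod_sum (fun j t => M (x j) t * M' t (y j))]
  apply Finset.sum_congr rfl
  intro c _
  rw [Finset.prod_mul_distrib]

open Polynomial in
lemma mono_ker (N d k : ℕ) (hN : k + 1 < N) (a : Fin d → Fin (k+1)) :
    ktfMat N d (k+1) *ᵥ (fun x : Fin d → Fin N => ∏ j, (((x j : ℕ) + 1 : ℝ) / N) ^ (a j : ℕ))
      = 0 := by
  funext p
  obtain ⟨j, i, y⟩ := p
  rw [ktf_mulVec]
  have hslice : (fun s : Fin N => ∏ l, (((ins d N j y s l : ℕ) + 1 : ℝ) / N) ^ (a l : ℕ))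
      = (∏ l : {l : Fin d // l ≠ j}, (((y l : ℕ) + 1 : ℝ) / N) ^ (a l.1 : ℕ)) •
        (fun s : Fin N => ((X : ℝ[X]) ^ (a j : ℕ)).eval (((s : ℕ) + 1 : ℝ) / N)) := by
    funext s
    rw [prod_split j]
    rw [ins_self]
    have : ∀ l : {l : Fin d // l ≠ j}, ins d N j y s l.1 = y l := fun l => ins_ne d N j y s l.1 l.2
    simp only [this, Pi.smul_apply, smul_eq_mul, eval_pow, eval_X]
    ring
  rw [hslice, mulVec_smul, dop_poly N k hN _ (by rw [natDegree_X_pow]; omega)]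
  simp


/-- Proposition 1: null space of the KTF penalty matrix.
For integers `k ≥ 0`, `d ≥ 1` and `N > k+1` (with `n = N^d`), the null space of the
KTF penalty matrix `D_{n,d}^{(k+1)}` has dimension `(k+1)^d`, and it equals the span of
the evaluations on the lattice `Z_{n,d} = {1/N,…,1}^d` of the monomials
`p(x) = x_1^{a_1} ⋯ x_d^{a_d}` over all exponents `a_1,…,a_d ∈ {0,…,k}`. -/
theorem ktf_null_space (k d N : ℕ) (hd : 1 ≤ d) (hN : k + 1 < N) :
    Module.finrank ℝ (LinearMap.ker (Matrix.mulVecLin (ktfMat N d (k + 1)))) = (k + 1) ^ d ∧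
    LinearMap.ker (Matrix.mulVecLin (ktfMat N d (k + 1))) =
      Submodule.span ℝ (Set.range fun a : Fin d → Fin (k + 1) =>
        fun x : Fin d → Fin N => ∏ j, (((x j : ℕ) + 1 : ℝ) / N) ^ (a j : ℕ)) := by
  classical
  set mono : (Fin d → Fin (k+1)) → (Fin d → Fin N) → ℝ :=
    fun a x => ∏ j, (((x j : ℕ) + 1 : ℝ) / N) ^ (a j : ℕ) with hmono
  set S := Submodule.span ℝ (Set.range mono) with hS
  set K := LinearMap.ker (Matrix.mulVecLin (ktfMat N d (k + 1))) with hK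
  have hdet := Vm_det_ne_zero N k hN
  have hU : IsUnit (Vm N k).det := isUnit_iff_ne_zero.mpr hdet
  set B : Matrix (Fin d → Fin (k+1)) (Fin d → Fin (k+1)) ℝ :=
    Matrix.of fun b a => ∏ j, Vm N k (b j) (a j) with hB
  set W : Matrix (Fin d → Fin (k+1)) (Fin d → Fin (k+1)) ℝ :=
    Matrix.of fun b a => ∏ j, (Vm N k)⁻¹ (b j) (a j) with hW
  have hBW : B * W = 1 := by
    ext x y
    rw [Matrix.mul_apply]
    simp only [hB, hW, Matrix.of_apply]
    rw [kron_mul, Matrix.mul_nonsing_inv _ hU]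
    simp only [Matrix.one_apply]
    rw [prod_if_eq]
  have hWB : W * B = 1 := by
    ext x y
    rw [Matrix.mul_apply]
    simp only [hB, hW, Matrix.of_apply]
    rw [kron_mul, Matrix.nonsing_inv_mul _ hU]
    simp only [Matrix.one_apply]
    rw [prod_if_eq]
  set cast : (Fin d → Fin (k+1)) → (Fin d → Fin N) :=
    fun b l => ⟨(b l : ℕ), by have := (b l).isLt; omega⟩ with hcast
  have hmono_cast : ∀ (a b : Fin d → Fin (k+1)), mono a (cast b) = B b a := by
    intro a b
    simp only [hmono, hB, hcast, Matrix.of_apply, Vm, Matrix.vandermonde]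
  -- span ⊆ ker
  have hSK : S ≤ K := by
    rw [hS, Submodule.span_le]
    rintro _ ⟨a, rfl⟩
    simp only [SetLike.mem_coe, hK, LinearMap.mem_ker, Matrix.mulVecLin_apply]
    exact mono_ker N d k hN a
  -- ker ⊆ span
  have hKS : K ≤ S := by
    intro v hv
    have hv' : ktfMat N d (k+1) *ᵥ v = 0 := by
      rwa [hK, LinearMap.mem_ker, Matrix.mulVecLin_apply] at hv
    set c : (Fin d → Fin (k+1)) → ℝ := W *ᵥ (fun b => v (cast b)) with hc
    set p : (Fin d → Fin N) → ℝ := fun x => ∑ a, c a * mono a x with hp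
    have hpsum : p = ∑ a : Fin d → Fin (k+1), c a • mono a := by
      funext x
      rw [hp]
      simp [Finset.sum_apply]
    have hpS : p ∈ S := by
      rw [hpsum]
      exact Submodule.sum_mem _ fun a _ =>
        Submodule.smul_mem _ _ (Submodule.subset_span ⟨a, rfl⟩)
    have hpker : ktfMat N d (k+1) *ᵥ p = 0 := by
      have := hSK hpS
      rwa [hK, LinearMap.mem_ker, Matrix.mulVecLin_apply] at this
    have hbox : ∀ b : Fin d → Fin (k+1), p (cast b) = v (cast b) := by
      intro b
      have : p (cast b) = (B *ᵥ c) b := by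
        rw [hp, Matrix.mulVec, dotProduct]
        apply Finset.sum_congr rfl
        intro a _
        rw [hmono_cast a b]; ring
      rw [this, hc, Matrix.mulVec_mulVec, hBW, Matrix.one_mulVec]
    have hvp : v - p = 0 := by
      apply ktf_vanish N d k hN _ _ _
      · rw [Matrix.mulVec_sub, hv', hpker, sub_zero]
      · intro x hx
        set b : Fin d → Fin (k+1) := fun l => ⟨(x l : ℕ), by have := hx l; omega⟩ with hb
        have hcb : cast b = x := by
          funext l
          exact Fin.ext rfl
        simp only [Pi.sub_apply, Pi.zero_apply]
        rw [← hcb, hbox b, sub_self]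
    have : v = p := by
      have := sub_eq_zero.mp hvp
      exact this
    rw [this]
    exact hpS
  have heq : K = S := le_antisymm hKS hSK
  refine ⟨?_, heq⟩
  rw [heq, hS]
  have li : LinearIndependent ℝ mono := by
    rw [Fintype.linearIndependent_iff]
    intro g hg a
    have hBg : B *ᵥ g = 0 := by
      funext b
      rw [Matrix.mulVec, dotProduct]
      have : ∑ a, B b a * g a = ∑ a, g a • mono a (cast b) := by
        apply Finset.sum_congr rfl
        intro a _
        rw [hmono_cast a b, smul_eq_mul]; ring
      rw [this]
      calc ∑ a, g a • mono a (cast b) = (∑ a, g a • mono a) (cast b) := by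
            simp [Finset.sum_apply]
      _ = 0 := by rw [hg]; rfl
    have hg0 : g = 0 := by
      calc g = (1 : Matrix (Fin d → Fin (k+1)) (Fin d → Fin (k+1)) ℝ) *ᵥ g := by
            rw [Matrix.one_mulVec]
      _ = (W * B) *ᵥ g := by rw [hWB]
      _ = W *ᵥ (B *ᵥ g) := by rw [Matrix.mulVec_mulVec]
      _ = W *ᵥ 0 := by rw [hBg]
      _ = 0 := Matrix.mulVec_zero W
    exact congrFun hg0 a
  rw [finrank_span_eq_card li]
  simp
end
end

section
/- Let k ≥ 0 and d ≥ 1 be integers. There exist constants c₁, c₂ > 0 depending only on k and d such that for every N > k+1 with n = N^d and every L > 0: 𝒞_{n,d}^k(L) ⊆ 𝒲_{n,d}^{k+1}( c₁ L n^{1/2 − (k+1)/d} ) ⊆ 𝒯_{n,d}^k( c₂ L n^{1 − (k+1)/d} ). That is, every vector of lattice evaluations of a function in the Hölder class C^k(L; [0,1]^d) satisfies ‖D_{n,d}^{(k+1)} θ‖₂ ≤ c₁ L n^{1/2−(k+1)/d}, and every θ with ‖D_{n,d}^{(k+1)} θ‖₂ ≤ ρ satisfies ‖D_{n,d}^{(k+1)}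 θ‖₁ ≤ (c₂/c₁)·√(dn)·ρ ≤ c₂ L n^{1−(k+1)/d}. -/
open scoped BigOperators ENNReal NNReal
open MeasureTheory ProbabilityTheory Matrix

noncomputable section

/-- The unit cube `[0,1]^d`. -/
def unitCube (d : ℕ) : Set (Fin d → ℝ) := {x | ∀ i, 0 ≤ x i ∧ x i ≤ 1}

/-- Membership in the Hölder class `C^k(L; [0,1]^d)`: `f` is `k` times continuously
differentiable on the cube and all of its order-`k` partial derivatives are
`L`-Lipschitz with respect to the Euclidean norm. -/
def HolderClass (k d : ℕ) (L : ℝ) (f : (Fin d → ℝ) → ℝ) : Prop :=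
  ContDiffOn ℝ k f (unitCube d) ∧
    ∀ m : Fin k → Fin d, ∀ x ∈ unitCube d, ∀ z ∈ unitCube d,
      |iteratedFDerivWithin ℝ k f (unitCube d) x (fun i => Pi.single (m i) 1) -
          iteratedFDerivWithin ℝ k f (unitCube d) z (fun i => Pi.single (m i) 1)| ≤
        L * Real.sqrt (∑ i, (x i - z i) ^ 2)

/-! Along a coordinate line, the `j`-th block of `D^{(k+1)}_{n,d}` is the `(k+1)`-st forward
difference, with step `1/N`, of the restriction of `f` to that line. This difference annihilates
the order-`k` Taylor polynomial, and because the `k`-th derivative is `L`-Lipschitz the Taylor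
remainder is at most `L ((k+1)/N)^{k+1}` on the `k+2` points involved; being a signed binomial
combination of those values, the difference is at most `2^{k+1}` times that. Summing the squares
of the at most `d n` entries gives the Sobolev bound, as `√n N^{-(k+1)} = n^{1/2-(k+1)/d}`, and
Cauchy–Schwarz `‖v‖₁ ≤ √(d n) ‖v‖₂` gives the KTV bound. -/

open Set Finset fwdDiff

theorem norm_fwdDiff_iter_le {M E : Type*} [AddCommMonoid M] [SeminormedAddCommGroup E]
    (h : M) (f : M → E) (n : ℕ) (y : M) {B : ℝ} (hB : ∀ j ≤ n, ‖f (y + j • h)‖ ≤ B) :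
    ‖(Δ_[h])^[n] f y‖ ≤ 2 ^ n * B := by
  rw [fwdDiff_iter_eq_sum_shift]
  calc ‖∑ j ∈ range (n + 1), ((-1 : ℤ) ^ (n - j) * n.choose j) • f (y + j • h)‖
      ≤ ∑ j ∈ range (n + 1), (n.choose j : ℝ) * B := by
        refine (norm_sum_le _ _).trans (sum_le_sum fun j hj => ?_)
        refine (norm_zsmul_le _ _).trans ?_
        have hcoeff : ‖((-1 : ℤ) ^ (n - j) * n.choose j)‖ = n.choose j := by simp
        rw [hcoeff]
        exact mul_le_mul_of_nonneg_left (hB j (by simpa [Nat.lt_succ_iff] using hj)) (by positivity)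
    _ = 2 ^ n * B := by
        rw [← sum_mul, ← Nat.cast_sum, Nat.sum_range_choose, Nat.cast_pow, Nat.cast_ofNat]

theorem fwdDiff_iter_taylorWithinEval_comp_eq_zero (f : ℝ → ℝ) (k : ℕ) (s : Set ℝ) (x h : ℝ) :
    (Δ_[1])^[k + 1] (fun r => taylorWithinEval f k s x (x + r * h)) = 0 := by
  have hpoly : (fun r => taylorWithinEval f k s x (x + r * h)) = fun r =>
      ∑ i ∈ range (k + 1), ((i.factorial : ℝ)⁻¹ * h ^ i * iteratedDerivWithin i f s x) * r ^ i := by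
    funext r
    rw [taylor_within_apply]
    refine sum_congr rfl fun i _ => ?_
    rw [smul_eq_mul, add_sub_cancel_left]
    ring
  rw [hpoly]
  exact fwdDiff_iter_sum_mul_pow_eq_zero _

theorem norm_sub_taylorWithinEval_le_of_lipschitz {E : Type*} [NormedAddCommGroup E]
    [NormedSpace ℝ E] (k : ℕ) {f : ℝ → E} {a b L : ℝ} (hab : a < b)
    (hf : ContDiffOn ℝ k f (Icc a b)) (hL : 0 ≤ L)
    (hLip : ∀ s ∈ Icc a b, ∀ t ∈ Icc a b,
      ‖iteratedDerivWithin k f (Icc a b) s - iteratedDerivWithin k f (Icc a b) t‖ ≤ L * |s - t|)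
    {x y : ℝ} (hx : x ∈ Icc a b) (hy : y ∈ Icc a b) (hxy : x ≤ y) :
    ‖f y - taylorWithinEval f k (Icc a b) x y‖ ≤ L * (y - x) ^ (k + 1) := by
  induction k generalizing f y with
  | zero =>
    simpa [abs_of_nonneg (sub_nonneg.mpr hxy)] using hLip y hy x hx
  | succ k ih =>
    set f' := derivWithin f (Icc a b)
    have hf' : ContDiffOn ℝ k f' (Icc a b) :=
      hf.derivWithin (uniqueDiffOn_Icc hab) (by norm_cast)
    have hLip' : ∀ s ∈ Icc a b, ∀ t ∈ Icc a b,
        ‖iteratedDerivWithin k f' (Icc a b) s - iteratedDerivWithin k f' (Icc a b) t‖ ≤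
          L * |s - t| := by
      simpa only [iteratedDerivWithin_succ'] using hLip
    have hsub : Icc x y ⊆ Icc a b := Icc_subset_Icc hx.1 hy.2
    have hderiv : ∀ t ∈ Icc x y, HasDerivWithinAt
        (fun t => f t - taylorWithinEval f (k + 1) (Icc a b) x t)
        (f' t - taylorWithinEval f' k (Icc a b) x t) (Icc x y) t := fun t ht =>
      ((hf.differentiableOn (by simp) t (hsub ht)).hasDerivWithinAt.mono hsub).sub
        (hasDerivAt_taylorWithinEval_succ f k).hasDerivWithinAt
    have hbound : ∀ t ∈ Icc x y,
        ‖f' t - taylorWithinEval f' k (Icc a b) x t‖ ≤ L * (y - x) ^ (k + 1) := fun t ht =>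
      (ih hf' hLip' (hsub ht) ht.1).trans <| by
        gcongr
        · linarith [ht.1]
        · exact ht.2
    have hmvt := (convex_Icc x y).norm_image_sub_le_of_norm_hasDerivWithin_le hderiv hbound
      (left_mem_Icc.mpr hxy) (right_mem_Icc.mpr hxy)
    rw [taylorWithinEval_self, sub_self, sub_zero, Real.norm_eq_abs,
      abs_of_nonneg (sub_nonneg.mpr hxy)] at hmvt
    exact hmvt.trans_eq (by ring)

theorem abs_fwdDiff_iter_comp_le_of_lipschitz (k : ℕ) {f : ℝ → ℝ} {a b L : ℝ} (hab : a < b)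
    (hf : ContDiffOn ℝ k f (Icc a b)) (hL : 0 ≤ L)
    (hLip : ∀ s ∈ Icc a b, ∀ t ∈ Icc a b,
      |iteratedDerivWithin k f (Icc a b) s - iteratedDerivWithin k f (Icc a b) t| ≤ L * |s - t|)
    {x h : ℝ} (hh : 0 ≤ h) (hx : a ≤ x) (hxh : x + (k + 1) * h ≤ b) :
    |(Δ_[1])^[k + 1] (fun r => f (x + r * h)) 0| ≤ 2 ^ (k + 1) * (L * ((k + 1) * h) ^ (k + 1)) := by
  set T := fun r => taylorWithinEval f k (Icc a b) x (x + r * h)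
  have hsplit : (fun r => f (x + r * h)) = T + fun r => f (x + r * h) - T r := by
    funext r; simp
  rw [hsplit, fwdDiff_iter_add, fwdDiff_iter_taylorWithinEval_comp_eq_zero, zero_add,
    ← Real.norm_eq_abs]
  refine norm_fwdDiff_iter_le _ _ _ _ fun j hj => ?_
  have hj' : (j : ℝ) ≤ k + 1 := by exact_mod_cast hj
  have hjh : 0 ≤ j * h := by positivity
  have hxb : x ≤ b := by nlinarith
  simp only [zero_add, nsmul_eq_mul, mul_one]
  refine (norm_sub_taylorWithinEval_le_of_lipschitz k hab hf hL hLip ⟨hx, hxb⟩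
    ⟨by linarith, by nlinarith⟩ (by linarith)).trans ?_
  rw [add_sub_cancel_left]
  gcongr

theorem iteratedDerivWithin_comp_add_smul {E F : Type*} [NormedAddCommGroup E]
    [NormedSpace ℝ E] [NormedAddCommGroup F] [NormedSpace ℝ F] {f : E → F} {s : Set E}
    {T : Set ℝ} {n : ℕ} (hf : ContDiffOn ℝ n f s) (hs : UniqueDiffOn ℝ s)
    (hT : UniqueDiffOn ℝ T) {p v : E} (hmaps : MapsTo (fun t => p + t • v) T s) :
    ∀ i ≤ n, ∀ t ∈ T, iteratedDerivWithin i (fun t => f (p + t • v)) T t =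
      iteratedFDerivWithin ℝ i f s (p + t • v) (fun _ => v) := by
  intro i
  induction i with
  | zero => simp
  | succ i ih =>
    intro hi t ht
    have hline : HasDerivWithinAt (fun t : ℝ => p + t • v) v T t := by
      simpa using ((hasDerivAt_id t).smul_const v).const_add p |>.hasDerivWithinAt
    have hdiff : DifferentiableWithinAt ℝ (iteratedFDerivWithin ℝ i f s) s (p + t • v) :=
      hf.differentiableOn_iteratedFDerivWithin (by exact_mod_cast hi) hs _ (hmaps ht)
    have hcomp : HasDerivWithinAt
        (fun t => iteratedFDerivWithin ℝ i f s (p + t • v) (fun _ => v))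
        (fderivWithin ℝ (iteratedFDerivWithin ℝ i f s) s (p + t • v) v (fun _ => v)) T t :=
      (ContinuousMultilinearMap.apply ℝ (fun _ : Fin i => E) F (fun _ => v)).hasFDerivAt
        |>.comp_hasDerivWithinAt t (hdiff.hasFDerivWithinAt.comp_hasDerivWithinAt t hline hmaps)
    rw [iteratedDerivWithin_succ, derivWithin_congr (fun t' ht' => ih (by omega) t' ht')
      (ih (by omega) t ht), hcomp.derivWithin (hT t ht), iteratedFDerivWithin_succ_apply_left]
    rfl

theorem sqrt_sum_sq_le_sqrt_card_mul {ι : Type*} [Fintype ι] {v : ι → ℝ} {B : ℝ} (hB0 : 0 ≤ B)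
    (hB : ∀ p, |v p| ≤ B) : √(∑ p, v p ^ 2) ≤ √(Fintype.card ι) * B := by
  rw [← Real.sqrt_sq hB0, ← Real.sqrt_mul (Nat.cast_nonneg _)]
  refine Real.sqrt_le_sqrt ?_
  calc ∑ p, v p ^ 2 ≤ ∑ _p : ι, B ^ 2 := sum_le_sum fun p _ => sq_le_sq.mpr <|
        (hB p).trans_eq (abs_of_nonneg hB0).symm
    _ = Fintype.card ι * B ^ 2 := by simp

theorem sum_abs_le_sqrt_card_mul_sqrt_sum_sq {ι : Type*} [Fintype ι] (v : ι → ℝ) :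
    ∑ p, |v p| ≤ √(Fintype.card ι) * √(∑ p, v p ^ 2) := by
  rw [← Real.sqrt_mul (Nat.cast_nonneg _)]
  refine Real.le_sqrt_of_sq_le ?_
  simpa using sq_sum_le_card_mul_sum_sq (s := univ) (f := fun p => |v p|)

theorem D1_mulVec_apply {M : ℕ} (v : Fin M → ℝ) (i : Fin (M - 1)) :
    (D1 M *ᵥ v) i = v ⟨i + 1, by omega⟩ - v ⟨i, by omega⟩ := by
  have hrow : D1 M i = Pi.single ⟨i + 1, by omega⟩ 1 - Pi.single ⟨i, by omega⟩ 1 := by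
    funext j
    simp only [D1, of_apply, Pi.sub_apply, Pi.single_apply, Fin.ext_iff]
    split_ifs <;> first | omega | norm_num
  rw [mulVec, hrow, sub_dotProduct, single_dotProduct, single_dotProduct, one_mul, one_mul]

theorem Dop_mulVec_eq_fwdDiff_iter {N : ℕ} (g : ℝ → ℝ) (u : Fin N → ℝ) (hu : ∀ t, u t = g t) (m : ℕ)
    (i : Fin (N - m)) : (Dop N m *ᵥ u) i = (Δ_[1])^[m] g i := by
  induction m with
  | zero =>
    have hrow : Dop N 0 i = Pi.single ⟨i, by omega⟩ 1 := by
      funext j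
      simp [Dop, Pi.single_apply, Fin.ext_iff, eq_comm]
    simp [mulVec, hrow, hu]
  | succ m ih =>
    rw [Dop, ← mulVec_mulVec, D1_mulVec_apply, ih, ih, Function.iterate_succ_apply', fwdDiff]
    push_cast
    rfl

theorem ktfMat_mulVec_apply {N d m : ℕ} (θ : (Fin d → Fin N) → ℝ) (j : Fin d) (i : Fin (N - m))
    (y : {l // l ≠ j} → Fin N) :
    (ktfMat N d m *ᵥ θ) ⟨j, i, y⟩ =
      (Dop N m *ᵥ fun t => θ ((Equiv.funSplitAt j (Fin N)).symm (t, y))) i := by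
  set e := Equiv.funSplitAt j (Fin N)
  have hentry : ∀ t y', ktfMat N d m ⟨j, i, y⟩ (e.symm (t, y')) =
      Dop N m i t * if y = y' then 1 else 0 := by
    intro t y'
    have hoff : ∀ l : {l // l ≠ j}, e.symm (t, y') l = y' l := fun l => by
      simp [e, Equiv.funSplitAt_symm_apply, l.2]
    simp only [ktfMat, of_apply, hoff, prod_boole, funext_iff]
    simp [e]
  simp only [mulVec, dotProduct]
  rw [← e.symm.sum_comp, Fintype.sum_prod_type]
  simp [hentry]

theorem card_ktfIdx (N d m : ℕ) : Fintype.card (KtfIdx N d m) = d * ((N - m) * N ^ (d - 1)) := by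
  simp [Fintype.card_sigma, Fintype.card_prod]

theorem card_ktfIdx_le (N d m : ℕ) : Fintype.card (KtfIdx N d m) ≤ d * N ^ d := by
  rw [card_ktfIdx]
  rcases d with _ | d
  · simp
  · rw [Nat.add_sub_cancel, pow_succ' N d]
    gcongr
    exact Nat.sub_le N m

theorem uniqueDiffOn_unitCube (d : ℕ) : UniqueDiffOn ℝ (unitCube d) := by
  have hcube : unitCube d = Set.pi univ fun _ => Icc (0 : ℝ) 1 := by
    ext x; simp only [Set.mem_univ_pi, Set.mem_Icc]; rfl
  rw [hcube]
  exact UniqueDiffOn.univ_pi fun _ => uniqueDiffOn_Icc_zero_one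

theorem mapsTo_add_smul_single_unitCube {d : ℕ} {p : Fin d → ℝ} {j : Fin d} (hpj : p j = 0)
    (hp : ∀ l, 0 ≤ p l ∧ p l ≤ 1) :
    MapsTo (fun s : ℝ => p + s • Pi.single j 1) (Icc 0 1) (unitCube d) := by
  intro s hs l
  by_cases hl : l = j
  · subst hl
    simpa [hpj] using hs
  · simpa [Pi.single_eq_of_ne hl] using hp l

theorem HolderClass.abs_fwdDiff_iter_comp_line_le {k d : ℕ} {L : ℝ} {f : (Fin d → ℝ) → ℝ}
    (hf : HolderClass k d L f) (hL : 0 ≤ L) {p : Fin d → ℝ} {j : Fin d}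
    (hmaps : MapsTo (fun s : ℝ => p + s • Pi.single j 1) (Icc 0 1) (unitCube d))
    {x h : ℝ} (hh : 0 ≤ h) (hx : 0 ≤ x) (hxh : x + (k + 1) * h ≤ 1) :
    |(Δ_[1])^[k + 1] (fun r => f (p + (x + r * h) • Pi.single j 1)) 0| ≤
      2 ^ (k + 1) * (L * ((k + 1) * h) ^ (k + 1)) := by
  have hderiv := iteratedDerivWithin_comp_add_smul hf.1 (uniqueDiffOn_unitCube d)
    uniqueDiffOn_Icc_zero_one hmaps k le_rfl
  have hsmooth : ContDiffOn ℝ k (fun s : ℝ => f (p + s • Pi.single j 1)) (Icc 0 1) :=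
    hf.1.comp (by fun_prop : ContDiff ℝ k fun s : ℝ => p + s • Pi.single j 1).contDiffOn hmaps
  refine abs_fwdDiff_iter_comp_le_of_lipschitz k zero_lt_one hsmooth hL (fun s hs t ht => ?_)
    hh hx hxh
  rw [hderiv s hs, hderiv t ht]
  refine (hf.2 (fun _ => j) _ (hmaps hs) _ (hmaps ht)).trans_eq ?_
  have hdist : ∑ l, ((p + s • Pi.single j 1 : Fin d → ℝ) l -
      (p + t • Pi.single j 1 : Fin d → ℝ) l) ^ 2 = (s - t) ^ 2 := by
    rw [Fintype.sum_eq_single j fun l hl => by simp [hl]]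
    simp
  rw [hdist, Real.sqrt_sq_eq_abs]

theorem abs_ktfMat_mulVec_le_of_holderClass {k d N : ℕ} {L : ℝ} {f : (Fin d → ℝ) → ℝ}
    (hf : HolderClass k d L f) (hL : 0 ≤ L) {θ : (Fin d → Fin N) → ℝ}
    (hθ : ∀ x, θ x = f fun j => ((x j : ℕ) + 1 : ℝ) / N) (q : KtfIdx N d (k + 1)) :
    |(ktfMat N d (k + 1) *ᵥ θ) q| ≤ 2 ^ (k + 1) * L * ((k + 1) / N : ℝ) ^ (k + 1) := by
  obtain ⟨j, i, y⟩ := q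
  have hi : (i : ℕ) + 1 + (k + 1) ≤ N := by omega
  set p : Fin d → ℝ := fun l => if h : l = j then 0 else ((y ⟨l, h⟩ : ℕ) + 1 : ℝ) / N
  have hmaps : MapsTo (fun s : ℝ => p + s • Pi.single j 1) (Icc 0 1) (unitCube d) := by
    refine mapsTo_add_smul_single_unitCube (by simp [p]) fun l => ?_
    by_cases hl : l = j
    · simp [p, hl]
    · have hyl : ((y ⟨l, hl⟩ : ℕ) + 1 : ℝ) ≤ N := by exact_mod_cast (y ⟨l, hl⟩).isLt
      simp only [p, dif_neg hl]
      exact ⟨by positivity, div_le_one_of_le₀ hyl (Nat.cast_nonneg N)⟩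
  have hline : ∀ t : Fin N, θ ((Equiv.funSplitAt j (Fin N)).symm (t, y)) =
      f (p + (((t : ℕ) + 1 : ℝ) / N) • Pi.single j 1) := by
    intro t
    rw [hθ]
    congr 1
    funext l
    by_cases hl : l = j
    · subst hl
      simp [p]
    · simp [p, hl, Equiv.funSplitAt_symm_apply]
  have hshift : ∀ r : ℝ, (r + i + 1) / N = ((i : ℕ) + 1 : ℝ) / N + r * (1 / N) := fun r => by
    ring
  rw [ktfMat_mulVec_apply,
    Dop_mulVec_eq_fwdDiff_iter (fun s => f (p + ((s + 1) / N) • Pi.single j 1)) _ hline,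
    ← zero_add ((i : ℕ) : ℝ), ← fwdDiff_iter_comp_add]
  simp only [hshift]
  have hN : (0 : ℝ) < N := by exact_mod_cast (show 0 < N by omega)
  refine (hf.abs_fwdDiff_iter_comp_line_le hL hmaps (by positivity) (by positivity) ?_).trans_eq
    (by ring)
  rw [mul_one_div, ← add_div, div_le_one hN]
  exact_mod_cast hi

theorem natCast_pow_rpow_half_sub {N d : ℕ} (hN : 0 < N) (hd : d ≠ 0) (a : ℝ) :
    ((N ^ d : ℕ) : ℝ) ^ ((1 : ℝ) / 2 - a / d) = √((N ^ d : ℕ) : ℝ) / (N : ℝ) ^ a := by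
  have hpos : (0 : ℝ) < (N ^ d : ℕ) := by positivity
  have hroot : ((N ^ d : ℕ) : ℝ) ^ (a / d) = (N : ℝ) ^ a := by
    rw [Nat.cast_pow, ← Real.rpow_natCast, ← Real.rpow_mul (Nat.cast_nonneg N),
      mul_div_cancel₀ _ (Nat.cast_ne_zero.mpr hd)]
  rw [Real.rpow_sub hpos, hroot, Real.sqrt_eq_rpow]

theorem sqrt_card_ktfIdx_le (N d m : ℕ) :
    √(Fintype.card (KtfIdx N d m)) ≤ √d * √((N ^ d : ℕ) : ℝ) := by
  rw [← Real.sqrt_mul (Nat.cast_nonneg d)]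
  exact Real.sqrt_le_sqrt (by exact_mod_cast card_ktfIdx_le N d m)

theorem sqrt_sum_sq_ktfMat_mulVec_le_of_holderClass {k d N : ℕ} {L : ℝ}
    {f : (Fin d → ℝ) → ℝ} (hf : HolderClass k d L f) (hL : 0 ≤ L) {θ : (Fin d → Fin N) → ℝ}
    (hθ : ∀ x, θ x = f fun j => ((x j : ℕ) + 1 : ℝ) / N) :
    √(∑ p, (ktfMat N d (k + 1) *ᵥ θ) p ^ 2) ≤
      √d * √((N ^ d : ℕ) : ℝ) * (2 ^ (k + 1) * L * ((k + 1) / N : ℝ) ^ (k + 1)) :=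
  (sqrt_sum_sq_le_sqrt_card_mul (by positivity)
    (abs_ktfMat_mulVec_le_of_holderClass hf hL hθ)).trans
      (by gcongr; exact sqrt_card_ktfIdx_le N d (k + 1))

theorem sum_abs_ktfMat_mulVec_le (N d m : ℕ) (θ : (Fin d → Fin N) → ℝ) :
    ∑ p, |(ktfMat N d m *ᵥ θ) p| ≤
      √d * √((N ^ d : ℕ) : ℝ) * √(∑ p, (ktfMat N d m *ᵥ θ) p ^ 2) :=
  (sum_abs_le_sqrt_card_mul_sqrt_sum_sq _).trans (by gcongr; exact sqrt_card_ktfIdx_le N d m)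

/-- Proposition 2: Hölder–Sobolev–KTV embeddings.  There are
constants `c₁, c₂ > 0` depending only on `k, d` such that for every `N > k+1`
(`n = N^d`) and `L > 0`: every lattice evaluation `θ` of a function in
`C^k(L; [0,1]^d)` satisfies `‖D_{n,d}^{(k+1)} θ‖₂ ≤ c₁ L n^{1/2-(k+1)/d}`
(i.e. `𝒞_{n,d}^k(L) ⊆ 𝒲_{n,d}^{k+1}(c₁ L n^{1/2-(k+1)/d})`), and every `θ` with
`‖D_{n,d}^{(k+1)} θ‖₂ ≤ c₁ L n^{1/2-(k+1)/d}` satisfies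
`‖D_{n,d}^{(k+1)} θ‖₁ ≤ c₂ L n^{1-(k+1)/d}`
(i.e. `𝒲_{n,d}^{k+1}(c₁ L n^{1/2-(k+1)/d}) ⊆ 𝒯_{n,d}^k(c₂ L n^{1-(k+1)/d})`). -/
theorem holder_sobolev_ktv_embedding (k d : ℕ) (hd : 1 ≤ d) :
    ∃ c₁ : ℝ, 0 < c₁ ∧ ∃ c₂ : ℝ, 0 < c₂ ∧
      ∀ N : ℕ, k + 1 < N → ∀ L : ℝ, 0 < L →
        (∀ θ : (Fin d → Fin N) → ℝ,
          (∃ f : (Fin d → ℝ) → ℝ, HolderClass k d L f ∧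
              ∀ x : Fin d → Fin N, θ x = f (fun j => ((x j : ℕ) + 1 : ℝ) / N)) →
          Real.sqrt (∑ p, ((ktfMat N d (k + 1)).mulVec θ p) ^ 2) ≤
            c₁ * L * ((N ^ d : ℕ) : ℝ) ^ ((1 : ℝ) / 2 - ((k : ℝ) + 1) / d)) ∧
        (∀ θ : (Fin d → Fin N) → ℝ,
          Real.sqrt (∑ p, ((ktfMat N d (k + 1)).mulVec θ p) ^ 2) ≤
            c₁ * L * ((N ^ d : ℕ) : ℝ) ^ ((1 : ℝ) / 2 - ((k : ℝ) + 1) / d) →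
          ∑ p, |(ktfMat N d (k + 1)).mulVec θ p| ≤
            c₂ * L * ((N ^ d : ℕ) : ℝ) ^ (1 - ((k : ℝ) + 1) / d)) := by
  have hd₀ : (0 : ℝ) < d := by exact_mod_cast hd
  refine ⟨√d * (2 ^ (k + 1) * (k + 1) ^ (k + 1)), by positivity,
    √d * (√d * (2 ^ (k + 1) * (k + 1) ^ (k + 1))), by positivity, fun N hN L hL => ?_⟩
  have hN₀ : 0 < N := by omega
  have hn : (0 : ℝ) < (N ^ d : ℕ) := by exact_mod_cast pow_pos hN₀ d
  have hscale := natCast_pow_rpow_half_sub hN₀ (d := d) (by omega) ((k : ℝ) + 1)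
  refine ⟨fun θ ⟨f, hf, hθ⟩ => ?_, fun θ hθ => (sum_abs_ktfMat_mulVec_le N d _ θ).trans ?_⟩
  · refine (sqrt_sum_sq_ktfMat_mulVec_le_of_holderClass hf hL.le hθ).trans_eq ?_
    rw [hscale, Real.rpow_add_one (by positivity), Real.rpow_natCast, ← pow_succ]
    field_simp
    rw [div_pow, div_mul_cancel₀ _ (by positivity)]
  · rw [show (1 : ℝ) - ((k : ℝ) + 1) / d = 1 / 2 + (1 / 2 - ((k : ℝ) + 1) / d) by ring,
      Real.rpow_add hn, ← Real.sqrt_eq_rpow]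
    exact (mul_le_mul_of_nonneg_left hθ (by positivity)).trans_eq (by ring)
end
end

section
/- Let k ≥ 0, d ≥ 1 be integers, N > k+1, and n = N^d. Every column of the KTF penalty matrix D_{n,d}^{(k+1)} has ℓ₁ norm at most 2^{k+1} d. Consequently, for every r > 0, the ℓ₁ ball embeds into the KTV class: { θ ∈ ℝ^n : ‖θ‖₁ ≤ r / (2^{k+1} d) } ⊆ 𝒯_{n,d}^k(r). -/
open scoped BigOperators ENNReal NNReal
open MeasureTheory ProbabilityTheory Matrix

noncomputable section

lemma sum_boole_le_one {α : Type*} [Fintype α] (p : α → Prop) [DecidablePred p]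
    (h : ∀ a b, p a → p b → a = b) :
    ∑ a, (if p a then (1 : ℝ) else 0) ≤ 1 := by
  rw [Finset.sum_boole]
  have : (Finset.univ.filter p).card ≤ 1 :=
    Finset.card_le_one.mpr fun a ha b hb =>
      h a b (Finset.mem_filter.mp ha).2 (Finset.mem_filter.mp hb).2
  exact_mod_cast this

lemma col_D1 (M : ℕ) (t : Fin M) : ∑ i : Fin (M - 1), |D1 M i t| ≤ 2 := by
  have hle : ∀ i : Fin (M - 1), |D1 M i t| ≤
      (if (t : ℕ) = (i : ℕ) then (1 : ℝ) else 0) +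
        (if (t : ℕ) = (i : ℕ) + 1 then (1 : ℝ) else 0) := by
    intro i
    simp only [D1, Matrix.of_apply]
    split_ifs <;> norm_num
  calc ∑ i : Fin (M - 1), |D1 M i t|
      ≤ ∑ i : Fin (M - 1), ((if (t : ℕ) = (i : ℕ) then (1 : ℝ) else 0) +
          (if (t : ℕ) = (i : ℕ) + 1 then (1 : ℝ) else 0)) :=
        Finset.sum_le_sum fun i _ => hle i
    _ = (∑ i : Fin (M - 1), (if (t : ℕ) = (i : ℕ) then (1 : ℝ) else 0)) +
          ∑ i : Fin (M - 1), (if (t : ℕ) = (i : ℕ) + 1 then (1 : ℝ) else 0) :=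
        Finset.sum_add_distrib
    _ ≤ 1 + 1 := add_le_add
        (sum_boole_le_one _ fun a b ha hb => Fin.ext (by omega))
        (sum_boole_le_one _ fun a b ha hb => Fin.ext (by omega))
    _ = 2 := by norm_num

lemma col_Dop (N : ℕ) : ∀ (m : ℕ) (j : Fin N), ∑ i : Fin (N - m), |Dop N m i j| ≤ 2 ^ m
  | 0, j => by
    simp only [Dop, Matrix.of_apply, pow_zero]
    have h : ∀ i : Fin (N - 0), |if (i : ℕ) = (j : ℕ) then (1 : ℝ) else 0| =
        if (i : ℕ) = (j : ℕ) then (1 : ℝ) else 0 := by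
      intro i; split_ifs <;> norm_num
    rw [Finset.sum_congr rfl fun i _ => h i]
    exact sum_boole_le_one _ fun a b ha hb => Fin.ext (by omega)
  | m + 1, j => by
    have ih := col_Dop N m j
    have hD1 := col_D1 (N - m)
    calc ∑ i : Fin (N - (m + 1)), |Dop N (m + 1) i j|
        = ∑ i : Fin (N - m - 1), |(D1 (N - m) * Dop N m) i j| := rfl
      _ ≤ ∑ i : Fin (N - m - 1), ∑ t : Fin (N - m), |D1 (N - m) i t| * |Dop N m t j| := by
          refine Finset.sum_le_sum fun i _ => ?_
          rw [Matrix.mul_apply]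
          refine (Finset.abs_sum_le_sum_abs _ _).trans ?_
          exact Finset.sum_le_sum fun t _ => le_of_eq (abs_mul _ _)
      _ = ∑ t : Fin (N - m), (∑ i : Fin (N - m - 1), |D1 (N - m) i t|) * |Dop N m t j| := by
          rw [Finset.sum_comm]
          exact Finset.sum_congr rfl fun t _ => (Finset.sum_mul _ _ _).symm
      _ ≤ ∑ t : Fin (N - m), 2 * |Dop N m t j| :=
          Finset.sum_le_sum fun t _ => mul_le_mul_of_nonneg_right (hD1 t) (abs_nonneg _)
      _ = 2 * ∑ t : Fin (N - m), |Dop N m t j| := (Finset.mul_sum _ _ _).symm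
      _ ≤ 2 * 2 ^ m := by nlinarith [ih]
      _ = 2 ^ (m + 1) := by ring

lemma ktf_col (k d N : ℕ) (x : Fin d → Fin N) :
    ∑ p, |ktfMat N d (k + 1) p x| ≤ 2 ^ (k + 1) * d := by
  rw [← Finset.univ_sigma_univ, Finset.sum_sigma]
  have key : ∀ j : Fin d,
      ∑ q : Fin (N - (k + 1)) × ({l : Fin d // l ≠ j} → Fin N),
        |ktfMat N d (k + 1) ⟨j, q⟩ x| ≤ 2 ^ (k + 1) := by
    intro j
    rw [Fintype.sum_prod_type]
    have hsum : ∑ y : ({l : Fin d // l ≠ j} → Fin N),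
        ∏ l : {l : Fin d // l ≠ j}, (if y l = x l.1 then (1 : ℝ) else 0) = 1 := by
      have h1 : ∀ y : ({l : Fin d // l ≠ j} → Fin N),
          (∏ l : {l : Fin d // l ≠ j}, (if y l = x l.1 then (1 : ℝ) else 0)) =
          if y = (fun l => x l.1) then 1 else 0 := by
        intro y
        rw [Finset.prod_boole]
        simp [funext_iff]
      simp [h1]
    have h2 : ∀ (i : Fin (N - (k + 1))) (y : ({l : Fin d // l ≠ j} → Fin N)),
        |ktfMat N d (k + 1) ⟨j, (i, y)⟩ x| =
          |Dop N (k + 1) i (x j)| *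
            ∏ l : {l : Fin d // l ≠ j}, (if y l = x l.1 then (1 : ℝ) else 0) := by
      intro i y
      simp only [ktfMat, Matrix.of_apply, abs_mul]
      congr 1
      exact abs_of_nonneg (Finset.prod_nonneg fun l _ => by positivity)
    calc ∑ i : Fin (N - (k + 1)), ∑ y : ({l : Fin d // l ≠ j} → Fin N),
          |ktfMat N d (k + 1) ⟨j, (i, y)⟩ x|
        = ∑ i : Fin (N - (k + 1)), |Dop N (k + 1) i (x j)| := by
          refine Finset.sum_congr rfl fun i _ => ?_
          rw [Finset.sum_congr rfl fun y _ => h2 i y, ← Finset.mul_sum, hsum, mul_one]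
      _ ≤ 2 ^ (k + 1) := col_Dop N (k + 1) (x j)
  calc ∑ j : Fin d, ∑ q : Fin (N - (k + 1)) × ({l : Fin d // l ≠ j} → Fin N),
        |ktfMat N d (k + 1) ⟨j, q⟩ x|
      ≤ ∑ _j : Fin d, (2 : ℝ) ^ (k + 1) := Finset.sum_le_sum fun j _ => key j
    _ = 2 ^ (k + 1) * d := by simp [mul_comm]

/-- ℓ₁-ball embedding into the KTV class.  Every column of the KTF
penalty matrix `D_{n,d}^{(k+1)}` has ℓ₁ norm at most `2^{k+1} d`; consequently, for any
`r > 0`, the ℓ₁ ball of radius `r/(2^{k+1} d)` is contained in the KTV class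
`𝒯_{n,d}^k(r) = {θ : ‖D_{n,d}^{(k+1)} θ‖₁ ≤ r}`. -/
theorem ktf_ell1_ball_embedding (k d N : ℕ) (hd : 1 ≤ d) (hN : k + 1 < N) :
    (∀ x : Fin d → Fin N, ∑ p, |ktfMat N d (k + 1) p x| ≤ 2 ^ (k + 1) * d) ∧
    (∀ r : ℝ, 0 < r →
      {θ : (Fin d → Fin N) → ℝ | ∑ x, |θ x| ≤ r / (2 ^ (k + 1) * d)} ⊆
        {θ : (Fin d → Fin N) → ℝ | ∑ p, |(ktfMat N d (k + 1)).mulVec θ p| ≤ r}) := by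
  constructor
  · exact ktf_col k d N
  · intro r hr θ hθ
    simp only [Set.mem_setOf_eq] at hθ ⊢
    have hpos : (0 : ℝ) < 2 ^ (k + 1) * d := by
      have h1 : (1 : ℝ) ≤ (d : ℝ) := by exact_mod_cast hd
      positivity
    calc ∑ p, |(ktfMat N d (k + 1)).mulVec θ p|
        ≤ ∑ p, ∑ x, |ktfMat N d (k + 1) p x| * |θ x| := by
          refine Finset.sum_le_sum fun p _ => ?_
          rw [Matrix.mulVec, dotProduct]
          refine (Finset.abs_sum_le_sum_abs _ _).trans ?_
          exact Finset.sum_le_sum fun x _ => le_of_eq (abs_mul _ _)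
      _ = ∑ x, (∑ p, |ktfMat N d (k + 1) p x|) * |θ x| := by
          rw [Finset.sum_comm]
          exact Finset.sum_congr rfl fun x _ => (Finset.sum_mul _ _ _).symm
      _ ≤ ∑ x, (2 ^ (k + 1) * d) * |θ x| :=
          Finset.sum_le_sum fun x _ =>
            mul_le_mul_of_nonneg_right (ktf_col k d N x) (abs_nonneg _)
      _ = (2 ^ (k + 1) * d) * ∑ x, |θ x| := (Finset.mul_sum _ _ _).symm
      _ ≤ (2 ^ (k + 1) * d) * (r / (2 ^ (k + 1) * d)) :=
          mul_le_mul_of_nonneg_left hθ hpos.le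
      _ = r := mul_div_cancel₀ r hpos.ne'
end
end

section
/- Let D ∈ ℝ^{N'×N} with N' ≤ N, and let γ_ℓ ≥ 0, u_ℓ ∈ ℝ^{N'}, v_ℓ ∈ ℝ^N (ℓ = 1, …, N) be such that {v_ℓ} is an orthonormal basis of ℝ^N, the vectors u_ℓ with γ_ℓ > 0 are orthonormal, D v_ℓ = γ_ℓ u_ℓ and Dᵀ u_ℓ = γ_ℓ v_ℓ for all ℓ, with γ_ℓ = 0 exactly for ℓ ∈ {1,…,p} where p = nullity(D). Assume the incoherence conditions ‖v_ℓ‖_∞ ≤ μ/√N for all ℓ and ‖u_ℓ‖_∞ ≤ μ/√N' for all ℓ with γ_ℓ > 0, for a constant μ ≥ 1. Let Δ be the vertical block concatenation, over positions ℓ = 1, …, d, of the Kronecker products I ⊗ ⋯ ⊗ D ⊗ ⋯ ⊗ I (D in the ℓ-th factor, identity I_N elsewhere). Then for each multi-index (i_1,…,i_d) ∈ {1,…,N}^d \ {1,…,p}^d, the vector ν_{i_1,…,i_d} = (Σ_{j=1}^d γ_{i_j}²)^{-1/2} · ( γ_{i_1} u_{i_1} ⊗ v_{i_2} ⊗ ⋯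 ⊗ v_{i_d} ; γ_{i_2} v_{i_1} ⊗ u_{i_2} ⊗ ⋯ ⊗ v_{i_d} ; … ; γ_{i_d} v_{i_1} ⊗ v_{i_2} ⊗ ⋯ ⊗ u_{i_d} ) (blocks stacked in the same order as Δ) is a unit-norm eigenvector of Δ Δᵀ with eigenvalue Σ_{j=1}^d γ_{i_j}², and it satisfies ‖ν_{i_1,…,i_d}‖_∞ ≤ μ^d / √(N^{d−1} N'). -/
open scoped BigOperators ENNReal NNReal
open Matrix

noncomputable section

/-- Row index type of the block operator `Δ`: a coordinate direction `j`, a row index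
of `D`, and the values of the other `d-1` lattice coordinates. -/
abbrev BlockIdx (N N' d : ℕ) :=
  Σ j : Fin d, Fin N' × ({l : Fin d // l ≠ j} → Fin N)

/-- The vertical block concatenation, over coordinate directions `ℓ = 1,…,d`, of the
Kronecker products `I_N ⊗ ⋯ ⊗ D ⊗ ⋯ ⊗ I_N` (`D` in the `ℓ`-th factor). -/
def blockMat (N N' d : ℕ) (D : Matrix (Fin N') (Fin N) ℝ) :
    Matrix (BlockIdx N N' d) (Fin d → Fin N) ℝ :=
  Matrix.of fun p x =>
    D p.2.1 (x p.1) *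
      ∏ l : {l : Fin d // l ≠ p.1}, (if p.2.2 l = x l.1 then (1:ℝ) else 0)

/-- The candidate eigenvector `ν_{i_1,…,i_d}` of `Δ Δᵀ`: the normalized stacking of
`γ_{i_ℓ} · v_{i_1} ⊗ ⋯ ⊗ u_{i_ℓ} ⊗ ⋯ ⊗ v_{i_d}` over the blocks `ℓ = 1,…,d`. -/
def nuVec (N N' d : ℕ) (γ : Fin N → ℝ) (u : Fin N → Fin N' → ℝ)
    (v : Fin N → Fin N → ℝ) (i : Fin d → Fin N) : BlockIdx N N' d → ℝ :=
  fun q => (Real.sqrt (∑ j, γ (i j) ^ 2))⁻¹ *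
    (γ (i q.1) * u (i q.1) q.2.1 * ∏ l : {l : Fin d // l ≠ q.1}, v (i l.1) (q.2.2 l))

/- auxiliary lemmas -/

lemma aux_prod_split {ι : Type*} [Fintype ι] [DecidableEq ι] (j : ι) (h : ι → ℝ) :
    ∏ l, h l = h j * ∏ l : {l : ι // l ≠ j}, h l.1 := by
  rw [← Finset.mul_prod_erase Finset.univ h (Finset.mem_univ j)]
  congr 1
  exact Finset.prod_subtype (Finset.univ.erase j)
    (by simp [Finset.mem_erase]) (fun l => h l)

lemma aux_sum_pi_prod {ι κ : Type*} [Fintype ι] [DecidableEq ι] [Fintype κ]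
    (F : ι → κ → ℝ) :
    ∑ g : ι → κ, ∏ l, F l (g l) = ∏ l, ∑ s, F l s := by
  rw [Finset.prod_univ_sum, Fintype.piFinset_univ]

lemma aux_sqrt_pow (x : ℝ) (hx : 0 ≤ x) (n : ℕ) :
    Real.sqrt (x ^ n) = Real.sqrt x ^ n := by
  have h : ((Real.sqrt x) ^ n) ^ 2 = x ^ n := by
    rw [← pow_mul, mul_comm, pow_mul, Real.sq_sqrt hx]
  rw [← h, Real.sqrt_sq (pow_nonneg (Real.sqrt_nonneg x) n)]

section Main

variable {N' N d : ℕ} (D : Matrix (Fin N') (Fin N) ℝ)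
  (γ : Fin N → ℝ) (u : Fin N → Fin N' → ℝ) (v : Fin N → Fin N → ℝ)
  (i : Fin d → Fin N)

/-- The unnormalized eigenvector. -/
def wVec (q : BlockIdx N N' d) : ℝ :=
  γ (i q.1) * u (i q.1) q.2.1 * ∏ l : {l : Fin d // l ≠ q.1}, v (i l.1) (q.2.2 l)

/-- The Kronecker product of the `v`'s. -/
def VVec (x : Fin d → Fin N) : ℝ := ∏ l, v (i l) (x l)

lemma aux_DeltaV (hDv : ∀ l, D.mulVec (v l) = γ l • u l) :
    (blockMat N N' d D).mulVec (VVec v i) = wVec γ u v i := by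
  funext q
  obtain ⟨j, r, g⟩ := q
  simp only [Matrix.mulVec, dotProduct, blockMat, Matrix.of_apply, VVec, wVec]
  rw [← Equiv.sum_comp (Equiv.funSplitAt j (Fin N)).symm
    (fun x => (D r (x j) * ∏ l : {l : Fin d // l ≠ j}, (if g l = x l.1 then (1:ℝ) else 0)) *
      ∏ l, v (i l) (x l))]
  rw [Fintype.sum_prod_type]
  have key : ∀ (t : Fin N) (g' : {l : Fin d // l ≠ j} → Fin N),
      (D r (((Equiv.funSplitAt j (Fin N)).symm (t, g')) j) *
        ∏ l : {l : Fin d // l ≠ j},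
          (if g l = ((Equiv.funSplitAt j (Fin N)).symm (t, g')) l.1 then (1:ℝ) else 0)) *
      ∏ l, v (i l) (((Equiv.funSplitAt j (Fin N)).symm (t, g')) l)
      = (D r t * v (i j) t) *
        ∏ l : {l : Fin d // l ≠ j},
          ((if g l = g' l then (1:ℝ) else 0) * v (i l.1) (g' l)) := by
    intro t g'
    have hx : ∀ l : Fin d, ((Equiv.funSplitAt j (Fin N)).symm (t, g')) l =
        if h : l = j then t else g' ⟨l, h⟩ := fun l => by
      rw [Equiv.funSplitAt_symm_apply]
    have hxj : ((Equiv.funSplitAt j (Fin N)).symm (t, g')) j = t := by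
      rw [hx]; simp
    have hxl : ∀ l : {l : Fin d // l ≠ j},
        ((Equiv.funSplitAt j (Fin N)).symm (t, g')) l.1 = g' l := fun l => by
      rw [hx]; rw [dif_neg l.2]
    rw [aux_prod_split j (fun l => v (i l) (((Equiv.funSplitAt j (Fin N)).symm (t, g')) l))]
    simp only [hxj, hxl]
    rw [Finset.prod_mul_distrib]
    ring
  rw [Finset.sum_congr rfl fun t _ => Finset.sum_congr rfl fun g' _ => key t g']
  simp only [← Finset.sum_mul, ← Finset.mul_sum]
  rw [aux_sum_pi_prod (fun l s => (if g l = s then (1:ℝ) else 0) * v (i l.1) s)]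
  have h1 : ∀ l : {l : Fin d // l ≠ j},
      ∑ s, (if g l = s then (1:ℝ) else 0) * v (i l.1) s = v (i l.1) (g l) := by
    intro l
    rw [Finset.sum_eq_single (g l)]
    · simp
    · intro b _ hb; simp [Ne.symm hb]
    · simp
  rw [Finset.prod_congr rfl fun l _ => h1 l]
  have h2 : ∑ t, D r t * v (i j) t = γ (i j) * u (i j) r := by
    have := congrFun (hDv (i j)) r
    simp only [Matrix.mulVec, dotProduct, Pi.smul_apply, smul_eq_mul] at this
    simpa using this
  rw [h2]

lemma aux_DeltaTw (hDTu : ∀ l, Dᵀ.mulVec (u l) = γ l • v l) :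
    (blockMat N N' d D)ᵀ.mulVec (wVec γ u v i)
      = fun x => (∑ j, γ (i j) ^ 2) * VVec v i x := by
  funext x
  simp only [Matrix.mulVec, dotProduct, Matrix.transpose_apply, blockMat, Matrix.of_apply,
    wVec, VVec]
  rw [← Finset.univ_sigma_univ, Finset.sum_sigma, Finset.sum_mul]
  refine Finset.sum_congr rfl fun j _ => ?_
  rw [Fintype.sum_prod_type]
  have key : ∀ (r : Fin N') (g : {l : Fin d // l ≠ j} → Fin N),
      (D r (x j) * ∏ l : {l : Fin d // l ≠ j}, (if g l = x l.1 then (1:ℝ) else 0)) *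
        (γ (i j) * u (i j) r * ∏ l : {l : Fin d // l ≠ j}, v (i l.1) (g l))
      = (γ (i j) * (D r (x j) * u (i j) r)) *
        ∏ l : {l : Fin d // l ≠ j},
          ((if g l = x l.1 then (1:ℝ) else 0) * v (i l.1) (g l)) := by
    intro r g
    rw [Finset.prod_mul_distrib]
    ring
  rw [Finset.sum_congr rfl fun r _ => Finset.sum_congr rfl fun g _ => key r g]
  simp only [← Finset.sum_mul, ← Finset.mul_sum]
  rw [aux_sum_pi_prod (fun (l : {l : Fin d // l ≠ j}) s =>
    (if (s : Fin N) = x l.1 then (1:ℝ) else 0) * v (i l.1) s)]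
  have h1 : ∀ l : {l : Fin d // l ≠ j},
      ∑ s, (if s = x l.1 then (1:ℝ) else 0) * v (i l.1) s = v (i l.1) (x l.1) := by
    intro l
    rw [Finset.sum_eq_single (x l.1)]
    · simp
    · intro b _ hb; simp [hb]
    · simp
  rw [Finset.prod_congr rfl fun l _ => h1 l]
  have h2 : ∑ r, D r (x j) * u (i j) r = γ (i j) * v (i j) (x j) := by
    have := congrFun (hDTu (i j)) (x j)
    simp only [Matrix.mulVec, dotProduct, Matrix.transpose_apply, Pi.smul_apply,
      smul_eq_mul] at this
    simpa using this
  rw [h2, aux_prod_split j (fun l => v (i l) (x l))]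
  ring

end Main

/-- Lemma: incoherence of Kronecker-product-type operators.  Given
a singular value decomposition data `(γ_ℓ, u_ℓ, v_ℓ)` of `D ∈ ℝ^{N'×N}` with
`γ_ℓ = 0` exactly for `ℓ ∈ {1,…,p}`, `p = nullity(D)`, and incoherent singular
vectors (`‖v_ℓ‖_∞ ≤ μ/√N`, `‖u_ℓ‖_∞ ≤ μ/√N'`), for each multi-index
`i ∉ {1,…,p}^d` the vector `ν_i` is a unit-norm eigenvector of `Δ Δᵀ` with eigenvalue
`Σ_j γ_{i_j}²`, and `‖ν_i‖_∞ ≤ μ^d / √(N^{d-1} N')`. -/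
theorem kronecker_block_incoherence (N' N d : ℕ) (hd : 1 ≤ d) (hNN : N' ≤ N)
    (D : Matrix (Fin N') (Fin N) ℝ)
    (γ : Fin N → ℝ) (u : Fin N → Fin N' → ℝ) (v : Fin N → Fin N → ℝ)
    (hγnonneg : ∀ l, 0 ≤ γ l)
    (hv_orth : ∀ a b, ∑ t, v a t * v b t = if a = b then (1 : ℝ) else 0)
    (hu_orth : ∀ a b, 0 < γ a → 0 < γ b → ∑ t, u a t * u b t = if a = b then (1 : ℝ) else 0)
    (hDv : ∀ l, D.mulVec (v l) = γ l • u l)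
    (hDTu : ∀ l, Dᵀ.mulVec (u l) = γ l • v l)
    (hnull : ∀ l : Fin N,
      γ l = 0 ↔ (l : ℕ) < Module.finrank ℝ (LinearMap.ker D.mulVecLin))
    (μ : ℝ) (hμ : 1 ≤ μ)
    (hv_inc : ∀ l t, |v l t| ≤ μ / Real.sqrt N)
    (hu_inc : ∀ l, 0 < γ l → ∀ t, |u l t| ≤ μ / Real.sqrt N')
    (i : Fin d → Fin N)
    (hi : ¬ ∀ j, (i j : ℕ) < Module.finrank ℝ (LinearMap.ker D.mulVecLin)) :
    (blockMat N N' d D * (blockMat N N' d D)ᵀ).mulVec (nuVec N N' d γ u v i) =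
        (∑ j, γ (i j) ^ 2) • nuVec N N' d γ u v i ∧
      ∑ q, nuVec N N' d γ u v i q ^ 2 = 1 ∧
      ∀ q, |nuVec N N' d γ u v i q| ≤
        μ ^ d / Real.sqrt ((N : ℝ) ^ (d - 1) * (N' : ℝ)) := by
  set S : ℝ := ∑ j, γ (i j) ^ 2 with hSdef
  -- positivity of S
  obtain ⟨j0, hj0⟩ := not_forall.mp hi
  have hγj0 : 0 < γ (i j0) :=
    lt_of_le_of_ne (hγnonneg _) (fun h => hj0 ((hnull (i j0)).mp h.symm))
  have hS : 0 < S := by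
    have h1 : γ (i j0) ^ 2 ≤ S :=
      Finset.single_le_sum (fun j _ => sq_nonneg (γ (i j))) (Finset.mem_univ j0)
    nlinarith
  have hsqS : 0 < Real.sqrt S := Real.sqrt_pos.mpr hS
  have hν : nuVec N N' d γ u v i = (Real.sqrt S)⁻¹ • wVec γ u v i := rfl
  -- eigenvector property
  have heig : (blockMat N N' d D * (blockMat N N' d D)ᵀ).mulVec (nuVec N N' d γ u v i)
      = S • nuVec N N' d γ u v i := by
    rw [hν, Matrix.mulVec_smul, ← Matrix.mulVec_mulVec,
      aux_DeltaTw D γ u v i hDTu]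
    have : (fun x => S * VVec v i x) = S • VVec v i := rfl
    rw [this, Matrix.mulVec_smul, aux_DeltaV D γ u v i hDv, smul_comm]
  refine ⟨heig, ?_, ?_⟩
  · -- norm
    have hw : ∑ q, wVec γ u v i q ^ 2 = S := by
      rw [← Finset.univ_sigma_univ, Finset.sum_sigma]
      refine Finset.sum_congr rfl fun j _ => ?_
      rw [Fintype.sum_prod_type]
      have key : ∀ (r : Fin N') (g : {l : Fin d // l ≠ j} → Fin N),
          wVec γ u v i ⟨j, (r, g)⟩ ^ 2
          = (γ (i j) ^ 2 * u (i j) r ^ 2) *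
            ∏ l : {l : Fin d // l ≠ j}, v (i l.1) (g l) ^ 2 := by
        intro r g
        simp only [wVec]
        rw [mul_pow, mul_pow, ← Finset.prod_pow]
      rw [Finset.sum_congr rfl fun r _ => Finset.sum_congr rfl fun g _ => key r g]
      simp only [← Finset.sum_mul, ← Finset.mul_sum]
      rw [aux_sum_pi_prod (fun (l : {l : Fin d // l ≠ j}) s => v (i l.1) s ^ 2)]
      have h1 : ∀ l : {l : Fin d // l ≠ j}, ∑ s, v (i l.1) s ^ 2 = 1 := by
        intro l
        have := hv_orth (i l.1) (i l.1)
        rw [if_pos rfl] at this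
        rw [← this]
        exact Finset.sum_congr rfl fun s _ => (sq (v (i l.1) s))
      rw [Finset.prod_congr rfl fun l _ => h1 l, Finset.prod_const_one]
      rcases eq_or_lt_of_le (hγnonneg (i j)) with h0 | hpos
      · simp [← h0]
      · have := hu_orth (i j) (i j) hpos hpos
        rw [if_pos rfl] at this
        have h2 : ∑ r, u (i j) r ^ 2 = 1 := by
          rw [← this]; exact Finset.sum_congr rfl fun s _ => (sq (u (i j) s))
        rw [h2]; ring
    calc ∑ q, nuVec N N' d γ u v i q ^ 2
        = (Real.sqrt S)⁻¹ ^ 2 * ∑ q, wVec γ u v i q ^ 2 := by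
          rw [Finset.mul_sum]
          exact Finset.sum_congr rfl fun q _ => by rw [hν]; simp [mul_pow]
      _ = 1 := by
          rw [hw, inv_pow, Real.sq_sqrt hS.le, inv_mul_cancel₀ hS.ne']
  · -- incoherence bound
    intro q
    obtain ⟨j, r, g⟩ := q
    have hμ0 : (0:ℝ) < μ := lt_of_lt_of_le one_pos hμ
    have hRHSnn : (0:ℝ) ≤ μ ^ d / Real.sqrt ((N : ℝ) ^ (d - 1) * (N' : ℝ)) :=
      div_nonneg (pow_nonneg hμ0.le _) (Real.sqrt_nonneg _)
    rcases eq_or_lt_of_le (hγnonneg (i j)) with h0 | hpos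
    · have : nuVec N N' d γ u v i ⟨j, (r, g)⟩ = 0 := by
        simp [nuVec, ← h0]
      rw [this, abs_zero]; exact hRHSnn
    · have hcard : Fintype.card {l : Fin d // l ≠ j} = d - 1 := by
        simp [Fintype.card_subtype_compl]
      have hRHSeq : Real.sqrt ((N : ℝ) ^ (d - 1) * (N' : ℝ))
          = Real.sqrt N ^ (d - 1) * Real.sqrt N' := by
        rw [Real.sqrt_mul (by positivity), aux_sqrt_pow _ (Nat.cast_nonneg N)]
      have h1 : (Real.sqrt S)⁻¹ * γ (i j) ≤ 1 := by
        rw [← inv_mul_cancel₀ hsqS.ne']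
        apply mul_le_mul_of_nonneg_left _ (inv_nonneg.mpr hsqS.le)
        have hle : γ (i j) ^ 2 ≤ S :=
          Finset.single_le_sum (fun l _ => sq_nonneg (γ (i l))) (Finset.mem_univ j)
        calc γ (i j) = Real.sqrt (γ (i j) ^ 2) := (Real.sqrt_sq (hγnonneg _)).symm
          _ ≤ Real.sqrt S := Real.sqrt_le_sqrt hle
      have h2 : |u (i j) r| ≤ μ / Real.sqrt N' := hu_inc _ hpos r
      have hμN : (0:ℝ) ≤ μ / Real.sqrt N := div_nonneg hμ0.le (Real.sqrt_nonneg _)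
      have hμN' : (0:ℝ) ≤ μ / Real.sqrt N' := div_nonneg hμ0.le (Real.sqrt_nonneg _)
      have h3 : ∏ l : {l : Fin d // l ≠ j}, |v (i l.1) (g l)| ≤ (μ / Real.sqrt N) ^ (d - 1) := by
        calc ∏ l : {l : Fin d // l ≠ j}, |v (i l.1) (g l)|
            ≤ ∏ _l : {l : Fin d // l ≠ j}, (μ / Real.sqrt N) :=
              Finset.prod_le_prod (fun _ _ => abs_nonneg _) (fun l _ => hv_inc _ _)
          _ = (μ / Real.sqrt N) ^ (d - 1) := by
              rw [Finset.prod_const, Finset.card_univ, hcard]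
      have hμpow : μ * μ ^ (d - 1) = μ ^ d := by
        rw [← pow_succ']
        congr 1
        omega
      calc |nuVec N N' d γ u v i ⟨j, (r, g)⟩|
          = ((Real.sqrt S)⁻¹ * γ (i j)) *
              (|u (i j) r| * ∏ l : {l : Fin d // l ≠ j}, |v (i l.1) (g l)|) := by
            simp only [nuVec, abs_mul, Finset.abs_prod,
              abs_of_nonneg (inv_nonneg.mpr (Real.sqrt_nonneg (∑ j, γ (i j) ^ 2))),
              abs_of_nonneg (hγnonneg (i j))]
            ring
        _ ≤ 1 * ((μ / Real.sqrt N') * (μ / Real.sqrt N) ^ (d - 1)) := by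
            refine mul_le_mul h1 (mul_le_mul h2 h3
              (Finset.prod_nonneg fun _ _ => abs_nonneg _) hμN')
              (mul_nonneg (abs_nonneg _) (Finset.prod_nonneg fun _ _ => abs_nonneg _))
              zero_le_one
        _ = μ ^ d / Real.sqrt ((N : ℝ) ^ (d - 1) * (N' : ℝ)) := by
            rw [div_pow, div_mul_div_comm, hRHSeq, hμpow, mul_comm (Real.sqrt N'), one_mul]
end
end

section
/- Let d ≥ 1 and m ≥ 0 be integers. For N ≥ 1 and multi-indices i ∈ {1,…,N}^d, set λ_i = Σ_{j=1}^d 4 sin²( π (i_j − 1) / (2N) ) (these are the eigenvalues of the Laplacian of the d-dimensional grid graph with n = N^d vertices). There exists a constant c > 0 depending only on m and d such that for every N ≥ 1 and every r₀ ∈ [1, √d · N]: Σ_{ i ∈ {1,…,N}^d : ‖i − 1‖₂ ≥ r₀ } λ_i^{−m} ≤ c n if 2m < d; ≤ c n log( 2√d · N / r₀ ) if 2m = d; and ≤ c N^{2m} r₀^{d−2m} if 2m > d, where 1 denotes the all-ones multi-index. -/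
/-!
By Jordan's inequality `sin x ≥ 2x/π` on `[0, π/2]`, `λ_i ≥ ‖i‖₂² / N²`, so the sum is at most
`N^{2m} ∑ ‖i‖₂^{-2m}` over the lattice points of the box with `‖i‖₂ ≥ r₀`. Group these points by
their sup-norm `t`: the shell `‖i‖_∞ = t` has at most `d (t+1)^{d-1} ≤ d 2^{d-1} t^{d-1}` points,
each with `‖i‖₂ ≥ t`, and it meets the region only if `√d t ≥ r₀`. What remains is
`d 2^{d-1} ∑_{r₀/√d ≤ t ≤ N} t^{d-1-2m}`, which is `O(N^{d-2m})`, `O(1 + log (√d N / r₀))` or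
`O((r₀/√d)^{d-2m})` according as the exponent `d-1-2m` is `≥ 0`, `= -1` or `≤ -2`.
-/

open Finset

theorem sq_div_sq_le_four_mul_sin_sq {N x : ℝ} (hN : 0 < N) (hx₀ : 0 ≤ x) (hxN : x ≤ N) :
    x ^ 2 / N ^ 2 ≤ 4 * Real.sin (Real.pi * x / (2 * N)) ^ 2 := by
  have hθ : Real.pi * x / (2 * N) ≤ Real.pi / 2 := by
    rw [div_le_div_iff₀ (by positivity) two_pos]
    nlinarith [Real.pi_pos]
  have hjordan := Real.mul_le_sin (by positivity) hθ
  rw [show 2 / Real.pi * (Real.pi * x / (2 * N)) = x / N by field_simp] at hjordan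
  rw [← div_pow]
  nlinarith [pow_le_pow_left₀ (by positivity) hjordan 2]

theorem sum_Icc_zpow_le_of_nonneg {p : ℤ} (hp : 0 ≤ p) {k : ℕ} (hk : 1 ≤ k) (N : ℕ) :
    ∑ t ∈ Icc k N, (t : ℝ) ^ p ≤ (N : ℝ) ^ (p + 1) := by
  calc ∑ t ∈ Icc k N, (t : ℝ) ^ p ≤ #(Icc k N) • (N : ℝ) ^ p :=
        sum_le_card_nsmul _ _ _ fun t ht =>
          zpow_le_zpow_left₀ hp (by positivity) (by exact_mod_cast (mem_Icc.1 ht).2)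
    _ ≤ N * (N : ℝ) ^ p := by
        rw [nsmul_eq_mul, Nat.card_Icc]
        gcongr
        exact_mod_cast (by omega : N + 1 - k ≤ N)
    _ = (N : ℝ) ^ (p + 1) := by
        rcases (Nat.cast_nonneg N : (0 : ℝ) ≤ N).eq_or_lt with h | h
        · rw [← h, zero_mul, zero_zpow _ (by omega)]
        · rw [zpow_add_one₀ h.ne', mul_comm]

theorem sum_Icc_inv_le_one_add_log {k N : ℕ} (hk : 1 ≤ k) (hkN : k ≤ N) :
    ∑ t ∈ Icc k N, (t : ℝ)⁻¹ ≤ 1 + Real.log N - Real.log k := by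
  obtain ⟨k, rfl⟩ := Nat.exists_eq_add_of_le' hk
  have hsplit : (harmonic N : ℝ) = harmonic k + ∑ t ∈ Icc (k + 1) N, (t : ℝ)⁻¹ := by
    simp only [harmonic_eq_sum_Icc, Rat.cast_sum, Rat.cast_inv, Rat.cast_natCast]
    rw [Icc_add_one_left_eq_Ioc k N, ← zero_add 1, Icc_add_one_left_eq_Ioc,
      Icc_add_one_left_eq_Ioc, sum_Ioc_consecutive _ k.zero_le (by omega)]
  linarith [log_add_one_le_harmonic k, harmonic_le_one_add_log N]

theorem sum_Icc_zpow_le_of_le_neg_two {p : ℤ} (hp : p ≤ -2) {k : ℕ} (hk : 1 ≤ k) (N : ℕ) :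
    ∑ t ∈ Icc k N, (t : ℝ) ^ p ≤ 2 * (k : ℝ) ^ (p + 1) := by
  have hk₀ : (0 : ℝ) < k := by exact_mod_cast hk
  have hterm : ∀ t ∈ Icc k N, (t : ℝ) ^ p ≤ (k : ℝ) ^ (p + 2) * ((t : ℝ) ^ 2)⁻¹ := by
    intro t ht
    have ht₀ : (0 : ℝ) < t := by exact_mod_cast hk.trans (mem_Icc.1 ht).1
    calc (t : ℝ) ^ p = (t : ℝ) ^ (p + 2) * ((t : ℝ) ^ 2)⁻¹ := by
          rw [zpow_add₀ ht₀.ne', zpow_ofNat, mul_inv_cancel_right₀ (by positivity)]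
      _ ≤ (k : ℝ) ^ (p + 2) * ((t : ℝ) ^ 2)⁻¹ := by
          gcongr
          simpa only [Real.rpow_intCast] using
            Real.rpow_le_rpow_of_nonpos (z := ((p + 2 : ℤ) : ℝ)) hk₀
              (by exact_mod_cast (mem_Icc.1 ht).1) (by exact_mod_cast (by omega : p + 2 ≤ 0))
  calc ∑ t ∈ Icc k N, (t : ℝ) ^ p ≤ (k : ℝ) ^ (p + 2) * ∑ t ∈ Icc k N, ((t : ℝ) ^ 2)⁻¹ := by
        rw [mul_sum]; exact sum_le_sum hterm
    _ ≤ (k : ℝ) ^ (p + 2) * (2 / k) := by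
        gcongr
        calc ∑ t ∈ Icc k N, ((t : ℝ) ^ 2)⁻¹ ≤ ∑ t ∈ Ioo (k - 1) (N + 1), ((t : ℝ) ^ 2)⁻¹ :=
              sum_le_sum_of_subset_of_nonneg (fun t ht => by simp at ht ⊢; omega)
                (fun _ _ _ => by positivity)
          _ ≤ 2 / ((k - 1 : ℕ) + 1) := sum_Ioo_inv_sq_le _ _
          _ = 2 / k := by rw [Nat.cast_sub hk]; ring_nf
    _ = 2 * (k : ℝ) ^ (p + 1) := by
        rw [zpow_add₀ hk₀.ne', zpow_add_one₀ hk₀.ne', zpow_ofNat]; field_simp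

theorem sq_sup_le_sum_sq {ι : Type*} [Fintype ι] (x : ι → ℕ) :
    ((univ.sup x : ℕ) : ℝ) ^ 2 ≤ ∑ j, (x j : ℝ) ^ 2 := by
  rcases isEmpty_or_nonempty ι with hι | hι
  · simp
  obtain ⟨j₀, -, hj₀⟩ := exists_mem_eq_sup univ univ_nonempty x
  rw [hj₀]
  exact single_le_sum (f := fun j => (x j : ℝ) ^ 2) (fun j _ => by positivity) (mem_univ j₀)

theorem sum_sq_le_card_mul_sq_sup {ι : Type*} [Fintype ι] (x : ι → ℕ) :
    ∑ j, (x j : ℝ) ^ 2 ≤ Fintype.card ι * ((univ.sup x : ℕ) : ℝ) ^ 2 := by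
  calc ∑ j, (x j : ℝ) ^ 2 ≤ ∑ _j : ι, ((univ.sup x : ℕ) : ℝ) ^ 2 := by
        gcongr with j
        exact_mod_cast le_sup (mem_univ j)
    _ = _ := by simp

theorem card_filter_sup_eq_le {ι : Type*} [Fintype ι] [DecidableEq ι] [Nonempty ι] (N t : ℕ) :
    #{i : ι → Fin N | univ.sup (fun j => (i j : ℕ)) = t} ≤
      Fintype.card ι * (t + 1) ^ (Fintype.card ι - 1) := by
  let box : ι → Finset (ι → ℕ) := fun j =>
    Fintype.piFinset (Function.update (fun _ => range (t + 1)) j {t})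
  calc #{i : ι → Fin N | univ.sup (fun j => (i j : ℕ)) = t}
      ≤ #(univ.biUnion box) := by
        refine card_le_card_of_injOn (fun i j => (i j : ℕ)) (fun i hi => ?_)
          (fun a _ b _ h => funext fun j => Fin.ext (congrFun h j))
        obtain ⟨j₀, -, hj₀⟩ := exists_mem_eq_sup univ univ_nonempty fun j => (i j : ℕ)
        have hle : ∀ j, (i j : ℕ) ≤ t := fun j =>
          (mem_filter.1 hi).2 ▸ le_sup (f := fun j => (i j : ℕ)) (mem_univ j)
        simp only [coe_biUnion, coe_univ, Set.mem_univ, Set.iUnion_true, Set.mem_iUnion,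
          mem_coe, box, Fintype.mem_piFinset]
        refine ⟨j₀, fun j => ?_⟩
        rcases eq_or_ne j j₀ with rfl | hj
        · simp [← hj₀, (mem_filter.1 hi).2]
        · simp [hj, Nat.lt_succ_of_le (hle j)]
    _ ≤ ∑ j, #(box j) := card_biUnion_le
    _ = Fintype.card ι * (t + 1) ^ (Fintype.card ι - 1) := by
        refine (sum_const_nat fun j _ => ?_).trans (by rw [card_univ])
        rw [Fintype.card_piFinset]
        simp_rw [Function.apply_update (fun _ => card), card_range, card_singleton]
        rw [prod_update_of_mem (mem_univ j), prod_const, card_univ_sdiff, card_singleton, one_mul]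

theorem sum_inv_sum_sq_pow_le {d : ℕ} (hd : 0 < d) (N m : ℕ) {r : ℝ} (hr : 0 < r) :
    ∑ i ∈ univ.filter (fun i : Fin d → Fin N => r ≤ √(∑ j, ((i j : ℕ) : ℝ) ^ 2)),
        ((∑ j, ((i j : ℕ) : ℝ) ^ 2) ^ m)⁻¹ ≤
      d * 2 ^ (d - 1) * ∑ t ∈ Icc ⌈r / √d⌉₊ N, (t : ℝ) ^ ((d : ℤ) - 1 - 2 * m) := by
  have : Nonempty (Fin d) := ⟨⟨0, hd⟩⟩
  set A := univ.filter (fun i : Fin d → Fin N => r ≤ √(∑ j, ((i j : ℕ) : ℝ) ^ 2))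
  set S : (Fin d → Fin N) → ℝ := fun i => ∑ j, ((i j : ℕ) : ℝ) ^ 2
  set s : (Fin d → Fin N) → ℕ := fun i => univ.sup fun j => (i j : ℕ)
  have hsS : ∀ i, ((s i : ℕ) : ℝ) ^ 2 ≤ S i := fun i => sq_sup_le_sum_sq fun j => (i j : ℕ)
  have hSs : ∀ i, S i ≤ d * ((s i : ℕ) : ℝ) ^ 2 := fun i => by
    simpa using sum_sq_le_card_mul_sq_sup fun j => (i j : ℕ)
  have hmaps : ∀ i ∈ A, s i ∈ Icc ⌈r / √d⌉₊ N := by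
    intro i hi
    refine mem_Icc.2 ⟨Nat.ceil_le.2 ?_, ?_⟩
    · rw [div_le_iff₀ (by positivity), mul_comm]
      calc r ≤ √(S i) := (mem_filter.1 hi).2
        _ ≤ √(d * ((s i : ℕ) : ℝ) ^ 2) := Real.sqrt_le_sqrt (hSs i)
        _ = √d * s i := by rw [Real.sqrt_mul (by positivity), Real.sqrt_sq (by positivity)]
    · exact Finset.sup_le fun j _ => (i j).isLt.le
  rw [← sum_fiberwise_of_maps_to hmaps, mul_sum]
  refine sum_le_sum fun t ht => ?_
  have ht₁ : (1 : ℝ) ≤ t := by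
    exact_mod_cast (Nat.one_le_ceil_iff.2 (by positivity)).trans (mem_Icc.1 ht).1
  have hterm : ∀ i ∈ A.filter (fun i => s i = t), (S i ^ m)⁻¹ ≤ ((t : ℝ) ^ (2 * m))⁻¹ := by
    intro i hi
    have htS : (t : ℝ) ^ 2 ≤ S i := (mem_filter.1 hi).2 ▸ hsS i
    rw [pow_mul]
    exact inv_anti₀ (by positivity) (pow_le_pow_left₀ (by positivity) htS m)
  have hcard : (#(A.filter fun i => s i = t) : ℝ) ≤ d * (t + 1) ^ (d - 1) := by
    have := (card_le_card (filter_subset_filter _ (subset_univ A))).trans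
      (card_filter_sup_eq_le (ι := Fin d) N t)
    simp only [Fintype.card_fin] at this
    exact_mod_cast this
  calc ∑ i ∈ A.filter (fun i => s i = t), (S i ^ m)⁻¹
      ≤ #(A.filter fun i => s i = t) • ((t : ℝ) ^ (2 * m))⁻¹ := sum_le_card_nsmul _ _ _ hterm
    _ ≤ d * (2 * t) ^ (d - 1) * ((t : ℝ) ^ (2 * m))⁻¹ := by
        rw [nsmul_eq_mul]
        gcongr
        exact hcard.trans (by gcongr; linarith)
    _ = d * 2 ^ (d - 1) * (t : ℝ) ^ ((d : ℤ) - 1 - 2 * m) := by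
        have ht₀ : (t : ℝ) ≠ 0 := by positivity
        rw [show (d : ℤ) - 1 - 2 * m = ((d - 1 : ℕ) : ℤ) - ((2 * m : ℕ) : ℤ) by omega,
          zpow_sub₀ ht₀, zpow_natCast, zpow_natCast, mul_pow]
        ring

noncomputable def gridEigenvalue {d N : ℕ} (i : Fin d → Fin N) : ℝ :=
  ∑ j, 4 * Real.sin (Real.pi * (i j : ℕ) / (2 * N)) ^ 2

noncomputable def gridInvEigenvaluePowTail (d N m : ℕ) (r₀ : ℝ) : ℝ :=
  ∑ i ∈ univ.filter (fun i : Fin d → Fin N => r₀ ≤ √(∑ j, ((i j : ℕ) : ℝ) ^ 2)),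
    (gridEigenvalue i ^ m)⁻¹

theorem sum_sq_div_sq_le_gridEigenvalue {d N : ℕ} (i : Fin d → Fin N) :
    (∑ j, ((i j : ℕ) : ℝ) ^ 2) / (N : ℝ) ^ 2 ≤ gridEigenvalue i := by
  rw [sum_div]
  refine sum_le_sum fun j _ => sq_div_sq_le_four_mul_sin_sq ?_ (Nat.cast_nonneg _) ?_
  · exact_mod_cast (i j).pos
  · exact_mod_cast (i j).isLt.le

theorem gridInvEigenvaluePowTail_le {d : ℕ} (hd : 0 < d) {N : ℕ} (hN : 0 < N) (m : ℕ)
    {r₀ : ℝ} (hr₀ : 0 < r₀) :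
    gridInvEigenvaluePowTail d N m r₀ ≤
      N ^ (2 * m) *
        (d * 2 ^ (d - 1) * ∑ t ∈ Icc ⌈r₀ / √d⌉₊ N, (t : ℝ) ^ ((d : ℤ) - 1 - 2 * m)) := by
  calc gridInvEigenvaluePowTail d N m r₀
      ≤ ∑ i ∈ univ.filter (fun i : Fin d → Fin N => r₀ ≤ √(∑ j, ((i j : ℕ) : ℝ) ^ 2)),
          (N : ℝ) ^ (2 * m) * ((∑ j, ((i j : ℕ) : ℝ) ^ 2) ^ m)⁻¹ := by
        refine sum_le_sum fun i hi => ?_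
        have hS : 0 < √(∑ j, ((i j : ℕ) : ℝ) ^ 2) := hr₀.trans_le (mem_filter.1 hi).2
        rw [Real.sqrt_pos] at hS
        calc (gridEigenvalue i ^ m)⁻¹ ≤ (((∑ j, ((i j : ℕ) : ℝ) ^ 2) / (N : ℝ) ^ 2) ^ m)⁻¹ :=
              inv_anti₀ (by positivity)
                (pow_le_pow_left₀ (by positivity) (sum_sq_div_sq_le_gridEigenvalue i) m)
          _ = _ := by rw [div_pow, ← pow_mul, inv_div, div_eq_mul_inv]
    _ = N ^ (2 * m) * ∑ i ∈ univ.filter (fun i : Fin d → Fin N =>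
          r₀ ≤ √(∑ j, ((i j : ℕ) : ℝ) ^ 2)), ((∑ j, ((i j : ℕ) : ℝ) ^ 2) ^ m)⁻¹ :=
        (mul_sum ..).symm
    _ ≤ _ := by gcongr; exact sum_inv_sum_sq_pow_le hd N m hr₀

theorem gridInvEigenvaluePowTail_le_of_two_mul_lt {d m N : ℕ} (h : 2 * m < d) (hN : 0 < N)
    {r₀ : ℝ} (hr₀ : 0 < r₀) :
    gridInvEigenvaluePowTail d N m r₀ ≤ d * 2 ^ (d - 1) * (N : ℝ) ^ d := by
  have hd : 0 < d := by omega
  calc gridInvEigenvaluePowTail d N m r₀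
      ≤ N ^ (2 * m) * (d * 2 ^ (d - 1) *
          ∑ t ∈ Icc ⌈r₀ / √d⌉₊ N, (t : ℝ) ^ ((d : ℤ) - 1 - 2 * m)) :=
        gridInvEigenvaluePowTail_le hd hN m hr₀
    _ ≤ N ^ (2 * m) * (d * 2 ^ (d - 1) * (N : ℝ) ^ ((d : ℤ) - 1 - 2 * m + 1)) := by
        gcongr
        exact sum_Icc_zpow_le_of_nonneg (by omega) (Nat.one_le_ceil_iff.2 (by positivity)) N
    _ = d * 2 ^ (d - 1) * (N : ℝ) ^ d := by
        rw [show (d : ℤ) - 1 - 2 * m + 1 = ((d - 2 * m : ℕ) : ℤ) by omega, zpow_natCast,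
          mul_left_comm, ← pow_add, Nat.add_sub_cancel' h.le]

theorem gridInvEigenvaluePowTail_le_of_two_mul_eq {d m N : ℕ} (h : 2 * m = d) (hd : 0 < d)
    (hN : 0 < N) {r₀ : ℝ} (hr₀ : 0 < r₀) (hrN : r₀ ≤ √d * N) :
    gridInvEigenvaluePowTail d N m r₀ ≤
      d * 2 ^ (d - 1) / Real.log 2 * (N : ℝ) ^ d * Real.log (2 * √d * N / r₀) := by
  set k := ⌈r₀ / √d⌉₊
  have hk : 1 ≤ k := Nat.one_le_ceil_iff.2 (by positivity)
  have hkN : k ≤ N := Nat.ceil_le.2 ((div_le_iff₀ (by positivity)).2 (by linarith))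
  have hlog2 : 0 < Real.log 2 := Real.log_pos one_lt_two
  have hlogN : Real.log N - Real.log k ≤ Real.log (√d * N / r₀) := by
    rw [← Real.log_div (by positivity) (by positivity)]
    refine Real.log_le_log (by positivity) ?_
    rw [div_le_div_iff₀ (by positivity) hr₀]
    have := (div_le_iff₀ (by positivity)).1 (Nat.le_ceil (r₀ / √d))
    nlinarith [(Nat.cast_nonneg N : (0 : ℝ) ≤ N)]
  have hlog : 1 + Real.log N - Real.log k ≤ Real.log (2 * √d * N / r₀) / Real.log 2 := by
    have hX : 0 ≤ Real.log (√d * N / r₀) := Real.log_nonneg ((one_le_div hr₀).2 hrN)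
    rw [le_div_iff₀ hlog2, mul_assoc, mul_div_assoc, Real.log_mul two_ne_zero (by positivity)]
    nlinarith [Real.log_two_lt_d9]
  calc gridInvEigenvaluePowTail d N m r₀
      ≤ N ^ (2 * m) * (d * 2 ^ (d - 1) * ∑ t ∈ Icc k N, (t : ℝ) ^ ((d : ℤ) - 1 - 2 * m)) :=
        gridInvEigenvaluePowTail_le hd hN m hr₀
    _ = N ^ d * (d * 2 ^ (d - 1) * ∑ t ∈ Icc k N, (t : ℝ)⁻¹) := by
        rw [show (d : ℤ) - 1 - 2 * m = -1 by omega, h]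
        simp only [zpow_neg_one]
    _ ≤ N ^ d * (d * 2 ^ (d - 1) * (Real.log (2 * √d * N / r₀) / Real.log 2)) := by
        gcongr
        exact (sum_Icc_inv_le_one_add_log hk hkN).trans hlog
    _ = _ := by ring

theorem gridInvEigenvaluePowTail_le_of_lt_two_mul {d m N : ℕ} (h : d < 2 * m) (hd : 0 < d)
    (hN : 0 < N) {r₀ : ℝ} (hr₀ : 0 < r₀) :
    gridInvEigenvaluePowTail d N m r₀ ≤
      2 * d * 2 ^ (d - 1) * √d ^ (2 * m - d) * (N : ℝ) ^ (2 * m) * r₀ ^ ((d : ℝ) - 2 * m) := by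
  set k := ⌈r₀ / √d⌉₊
  have hk : 1 ≤ k := Nat.one_le_ceil_iff.2 (by positivity)
  have hq : ((d : ℤ) - 2 * m : ℤ) ≤ 0 := by omega
  have hkq : (k : ℝ) ^ ((d : ℤ) - 2 * m) ≤ (r₀ / √d) ^ ((d : ℤ) - 2 * m) := by
    simpa only [Real.rpow_intCast] using Real.rpow_le_rpow_of_nonpos
      (z := (((d : ℤ) - 2 * m : ℤ) : ℝ)) (by positivity) (Nat.le_ceil (r₀ / √d))
      (by exact_mod_cast hq)
  calc gridInvEigenvaluePowTail d N m r₀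
      ≤ N ^ (2 * m) * (d * 2 ^ (d - 1) * ∑ t ∈ Icc k N, (t : ℝ) ^ ((d : ℤ) - 1 - 2 * m)) :=
        gridInvEigenvaluePowTail_le hd hN m hr₀
    _ ≤ N ^ (2 * m) * (d * 2 ^ (d - 1) * (2 * (k : ℝ) ^ ((d : ℤ) - 2 * m))) := by
        gcongr
        have := sum_Icc_zpow_le_of_le_neg_two (p := (d : ℤ) - 1 - 2 * m) (by omega) hk N
        rwa [show (d : ℤ) - 1 - 2 * m + 1 = d - 2 * m by ring] at this
    _ ≤ N ^ (2 * m) * (d * 2 ^ (d - 1) * (2 * (r₀ / √d) ^ ((d : ℤ) - 2 * m))) := by gcongr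
    _ = _ := by
        rw [show (d : ℝ) - 2 * m = (((d : ℤ) - 2 * m : ℤ) : ℝ) by push_cast; ring,
          Real.rpow_intCast, ← zpow_natCast (√d),
          show ((2 * m - d : ℕ) : ℤ) = -((d : ℤ) - 2 * m) by omega, zpow_neg, div_zpow,
          div_eq_mul_inv]
        ring

/-- Lemma: partial sums of inverse powers of grid-Laplacian
eigenvalues.  For the `d`-dimensional grid graph on `n = N^d` vertices, the Laplacian
eigenvalues are `λ_i = Σ_{j=1}^d 4 sin²(π(i_j-1)/(2N))` for multi-indices
`i ∈ {1,…,N}^d` (here `0`-indexed by `Fin N`).  There is a constant `c > 0` depending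
only on `m` and `d` such that for every `N ≥ 1` and every `r₀ ∈ [1, √d·N]`, the sum of
`λ_i^{-m}` over `{i : ‖i - 1‖₂ ≥ r₀}` is at most `c n` if `2m < d`, at most
`c n log(2√d·N/r₀)` if `2m = d`, and at most `c N^{2m} r₀^{d-2m}` if `2m > d`. -/
theorem grid_laplacian_inverse_eigenvalue_sums (d m : ℕ) (hd : 1 ≤ d) :
    ∃ c : ℝ, 0 < c ∧ ∀ N : ℕ, 1 ≤ N → ∀ r₀ : ℝ, 1 ≤ r₀ → r₀ ≤ Real.sqrt d * N →
      ((2 * m < d →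
        ∑ i ∈ Finset.univ.filter (fun i : Fin d → Fin N =>
              r₀ ≤ Real.sqrt (∑ j, ((i j : ℕ) : ℝ) ^ 2)),
            ((∑ j, 4 * Real.sin (Real.pi * (i j : ℕ) / (2 * N)) ^ 2) ^ m)⁻¹ ≤
          c * (N ^ d : ℕ)) ∧
      (2 * m = d →
        ∑ i ∈ Finset.univ.filter (fun i : Fin d → Fin N =>
              r₀ ≤ Real.sqrt (∑ j, ((i j : ℕ) : ℝ) ^ 2)),
            ((∑ j, 4 * Real.sin (Real.pi * (i j : ℕ) / (2 * N)) ^ 2) ^ m)⁻¹ ≤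
          c * (N ^ d : ℕ) * Real.log (2 * Real.sqrt d * N / r₀)) ∧
      (d < 2 * m →
        ∑ i ∈ Finset.univ.filter (fun i : Fin d → Fin N =>
              r₀ ≤ Real.sqrt (∑ j, ((i j : ℕ) : ℝ) ^ 2)),
            ((∑ j, 4 * Real.sin (Real.pi * (i j : ℕ) / (2 * N)) ^ 2) ^ m)⁻¹ ≤
          c * (N : ℝ) ^ (2 * m) * r₀ ^ ((d : ℝ) - 2 * m))) := by
  have hC : (0 : ℝ) < d * 2 ^ (d - 1) := by positivity
  rcases lt_trichotomy (2 * m) d with h | h | h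
  · refine ⟨d * 2 ^ (d - 1), hC, fun N hN r₀ hr₀ _ =>
      ⟨fun _ => ?_, fun h' => absurd h' h.ne, fun h' => absurd h' h.not_gt⟩⟩
    rw [Nat.cast_pow]
    exact gridInvEigenvaluePowTail_le_of_two_mul_lt h hN (by linarith)
  · refine ⟨d * 2 ^ (d - 1) / Real.log 2, div_pos hC (Real.log_pos one_lt_two),
      fun N hN r₀ hr₀ hrN => ⟨fun h' => absurd h h'.ne, fun _ => ?_, fun h' => absurd h h'.ne'⟩⟩
    rw [Nat.cast_pow]
    exact gridInvEigenvaluePowTail_le_of_two_mul_eq h hd hN (by linarith) hrN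
  · refine ⟨2 * d * 2 ^ (d - 1) * √d ^ (2 * m - d), by positivity, fun N hN r₀ hr₀ _ =>
      ⟨fun h' => absurd h h'.not_gt, fun h' => absurd h h'.not_gt, fun _ => ?_⟩⟩
    exact gridInvEigenvaluePowTail_le_of_lt_two_mul h hd hN (by linarith)
end

section
/- Let k ≥ 0, d ≥ 1 be integers, N > k+1, n = N^d. Let ρ_1 ≤ ⋯ ≤ ρ_N be the increasingly ordered eigenvalues of (D_N^{(k+1)})ᵀ D_N^{(k+1)}, and let α_ℓ = 4 sin²( π(ℓ−1)/(2N) ) for ℓ ∈ {1,…,N} be the increasingly ordered eigenvalues of the Laplacian of the chain graph on N vertices, with the convention α_ℓ = 0 for ℓ ≤ 0. Then for every multi-index i ∈ {1,…,N}^d, Σ_{j=1}^d ρ_{i_j} ≥ d^{−k} ( Σ_{j=1}^d α_{i_j − k − 1} )^{k+1}. -/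
open scoped BigOperators ENNReal NNReal
open MeasureTheory ProbabilityTheory Matrix

noncomputable section

namespace KTF

/-- entries of `Dop`: `(-1)^(m+(j-r)) * choose m (j-r)` on the band `r ≤ j ≤ r+m`. -/
def dcoef (m r j : ℕ) : ℝ :=
  if r ≤ j ∧ j ≤ r + m then (-1 : ℝ) ^ (m + (j - r)) * (m.choose (j - r)) else 0

lemma dcoef_shift (m r j : ℕ) : dcoef m (r + 1) (j + 1) = dcoef m r j := by
  unfold dcoef
  have h1 : (r + 1 ≤ j + 1 ∧ j + 1 ≤ r + 1 + m) ↔ (r ≤ j ∧ j ≤ r + m) := by omega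
  rw [Nat.succ_sub_succ, if_congr h1 rfl rfl]

lemma dcoef_eq_zero_of_lt {m r j : ℕ} (h : j < r) : dcoef m r j = 0 := by
  unfold dcoef; rw [if_neg]; omega

lemma dcoef_eq_zero_of_gt {m r j : ℕ} (h : r + m < j) : dcoef m r j = 0 := by
  unfold dcoef; rw [if_neg]; omega

lemma dcoef_rec (m r j : ℕ) :
    dcoef (m + 1) r j = dcoef m (r + 1) j - dcoef m r j := by
  rcases lt_or_ge j r with h | h
  · rw [dcoef_eq_zero_of_lt h, dcoef_eq_zero_of_lt (by omega),
      dcoef_eq_zero_of_lt (by omega)]; ring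
  rcases eq_or_lt_of_le h with rfl | hlt
  · rw [dcoef_eq_zero_of_lt (m := m) (r := r + 1) (j := r) (by omega)]
    unfold dcoef
    rw [if_pos ⟨le_refl _, by omega⟩, if_pos ⟨le_refl _, by omega⟩]
    simp [Nat.sub_self, pow_succ]
  · -- r < j
    rcases lt_or_ge (r + m + 1) j with hgt | hle
    · rw [dcoef_eq_zero_of_gt (by omega), dcoef_eq_zero_of_gt (by omega),
        dcoef_eq_zero_of_gt (by omega)]; ring
    · -- r + 1 ≤ j ≤ r + m + 1
      obtain ⟨q, rfl⟩ : ∃ q, j = r + 1 + q := ⟨j - (r+1), by omega⟩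
      have hq : q ≤ m := by omega
      unfold dcoef
      rw [if_pos ⟨by omega, by omega⟩, if_pos ⟨by omega, by omega⟩]
      have e1 : r + 1 + q - r = q + 1 := by omega
      have e2 : r + 1 + q - (r + 1) = q := by omega
      rw [e1, e2]
      rcases eq_or_lt_of_le hq with rfl | hq2
      · rw [if_neg (by omega)]
        simp [Nat.choose_self, pow_succ]
      · rw [if_pos ⟨by omega, by omega⟩, Nat.choose_succ_succ]
        have hs1 : ((-1 : ℝ)) ^ (m + 1 + (q + 1)) = (-1) ^ (m + q) := by
          rw [show m + 1 + (q + 1) = (m + q) + 2 by ring, pow_add]; norm_num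
        have hs2 : ((-1 : ℝ)) ^ (m + (q + 1)) = -(-1) ^ (m + q) := by
          rw [show m + (q + 1) = (m + q) + 1 by ring, pow_succ]; ring
        rw [hs1, hs2]
        push_cast
        ring

end KTF

namespace KTF
section Entries
variable {N : ℕ}

lemma sum_ite_nat {M : ℕ} (n : ℕ) (hn : n < M) (v : ℝ) :
    (∑ x : Fin M, if (x : ℕ) = n then v else 0) = v := by
  rw [Finset.sum_eq_single (⟨n, hn⟩ : Fin M)]
  · simp
  · intro b _ hb
    rw [if_neg (by simpa [Fin.ext_iff] using hb)]
  · simp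

lemma dop_entry : ∀ (m : ℕ) (r : Fin (N - m)) (j : Fin N),
    Dop N m r j = dcoef m (r : ℕ) (j : ℕ)
  | 0, r, j => by
    show (if ((r : Fin (N - 0)) : ℕ) = (j : ℕ) then (1:ℝ) else 0) = _
    unfold dcoef
    rcases eq_or_ne ((r : Fin (N-0)) : ℕ) (j : ℕ) with h | h
    · rw [if_pos h, if_pos ⟨le_of_eq h, by omega⟩]
      simp [← h]
    · rw [if_neg h, if_neg (by omega)]
  | m + 1, r, j => by
    have hr : (r : ℕ) < N - m - 1 := r.2
    show ∑ t : Fin (N - m), D1 (N - m) r t * Dop N m t j = _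
    have hstep : ∀ t : Fin (N - m),
        D1 (N - m) r t * Dop N m t j =
          (if (t : ℕ) = (r : ℕ) then -dcoef m (r : ℕ) (j : ℕ) else 0) +
          (if (t : ℕ) = (r : ℕ) + 1 then dcoef m ((r : ℕ) + 1) (j : ℕ) else 0) := by
      intro t
      show (if (t : ℕ) = (r : ℕ) then (-1:ℝ) else if (t:ℕ) = (r:ℕ)+1 then 1 else 0) * _ = _
      rcases eq_or_ne ((t : ℕ)) ((r : ℕ)) with h | h
      · rw [if_pos h, if_pos h, if_neg (by omega), dop_entry m t j, h]; ring
      · rw [if_neg h, if_neg h]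
        rcases eq_or_ne ((t : ℕ)) ((r : ℕ) + 1) with h2 | h2
        · rw [if_pos h2, if_pos h2, dop_entry m t j, h2]; ring
        · rw [if_neg h2, if_neg h2]; ring
    rw [Finset.sum_congr rfl (fun t _ => hstep t), Finset.sum_add_distrib,
      sum_ite_nat (r : ℕ) (by omega), sum_ite_nat ((r : ℕ) + 1) (by omega), dcoef_rec]
    ring
end Entries

namespace KTF
variable {N : ℕ}

def LN (N : ℕ) : Matrix (Fin N) (Fin N) ℝ := (D1 N)ᵀ * D1 N

def lent (N a b : ℕ) : ℝ :=
  (if a = b ∧ a + 1 < N then 1 else 0) + (if a = b ∧ 0 < a then 1 else 0)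
  + (if b = a + 1 ∧ a + 1 < N then -1 else 0) + (if a = b + 1 ∧ b + 1 < N then -1 else 0)

lemma sum_ite_nat' {M : ℕ} (n : ℕ) (P : Prop) [Decidable P] (f : ℕ → ℝ) :
    (∑ x : Fin M, if (x : ℕ) = n ∧ P then f (x : ℕ) else 0) = if n < M ∧ P then f n else 0 := by
  by_cases hn : n < M
  · rw [Finset.sum_eq_single (⟨n, hn⟩ : Fin M)]
    · by_cases hP : P <;> simp [hP, hn]
    · intro b _ hb
      rw [if_neg (by rintro ⟨h1, -⟩; exact hb (by simpa [Fin.ext_iff] using h1))]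
    · simp
  · rw [if_neg (by omega), Finset.sum_eq_zero]
    intro x _
    rw [if_neg (by rintro ⟨h1, -⟩; omega)]

lemma LN_entry (a b : Fin N) : LN N a b = lent N (a : ℕ) (b : ℕ) := by
  have ha := a.2; have hb := b.2
  show (∑ i : Fin (N - 1), (D1 N)ᵀ a i * D1 N i b) = _
  have hstep : ∀ i : Fin (N - 1), (D1 N)ᵀ a i * D1 N i b =
      (if (i : ℕ) = (a : ℕ) ∧ (b : ℕ) = (a : ℕ) then (1:ℝ) else 0)
      + (if (i : ℕ) = (a : ℕ) ∧ (b : ℕ) = (a : ℕ) + 1 then -1 else 0)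
      + (if (i : ℕ) = (a : ℕ) - 1 ∧ ((b : ℕ) = (a : ℕ) ∧ 0 < (a : ℕ)) then 1 else 0)
      + (if (i : ℕ) = (b : ℕ) ∧ (a : ℕ) = (b : ℕ) + 1 then -1 else 0) := by
    intro i
    have hi := i.2
    show (if (a : ℕ) = (i : ℕ) then (-1:ℝ) else if (a : ℕ) = (i : ℕ) + 1 then 1 else 0)
        * (if (b : ℕ) = (i : ℕ) then (-1:ℝ) else if (b : ℕ) = (i : ℕ) + 1 then 1 else 0) = _
    split_ifs <;> first | ring1 | (exfalso; omega)
  rw [Finset.sum_congr rfl (fun i _ => hstep i)]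
  simp only [Finset.sum_add_distrib]
  rw [sum_ite_nat' (M := N - 1) (a : ℕ) _ (fun _ => (1:ℝ)),
    sum_ite_nat' (M := N - 1) (a : ℕ) _ (fun _ => (-1:ℝ)),
    sum_ite_nat' (M := N - 1) ((a : ℕ) - 1) _ (fun _ => (1:ℝ)),
    sum_ite_nat' (M := N - 1) (b : ℕ) _ (fun _ => (-1:ℝ))]
  unfold lent
  split_ifs <;> first | ring1 | (exfalso; omega)

/-- entries of `Dop N m * LN N`. -/
lemma mul_LN_entry (m : ℕ) (p : Fin (N - m)) (j : Fin N) :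
    (Dop N m * LN N) p j =
      (if (j : ℕ) + 1 < N then dcoef m (p : ℕ) (j : ℕ) - dcoef m (p : ℕ) ((j : ℕ) + 1) else 0)
      + (if 0 < (j : ℕ) then dcoef m (p : ℕ) (j : ℕ) - dcoef m (p : ℕ) ((j : ℕ) - 1) else 0) := by
  have hj := j.2
  show (∑ t : Fin N, Dop N m p t * LN N t j) = _
  have hstep : ∀ t : Fin N, Dop N m p t * LN N t j =
      (if (t : ℕ) = (j : ℕ) ∧ (j : ℕ) + 1 < N then dcoef m (p : ℕ) (t : ℕ) else 0)
      + (if (t : ℕ) = (j : ℕ) ∧ 0 < (j : ℕ) then dcoef m (p : ℕ) (t : ℕ) else 0)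
      + (if (t : ℕ) = (j : ℕ) - 1 ∧ 0 < (j : ℕ) then -dcoef m (p : ℕ) (t : ℕ) else 0)
      + (if (t : ℕ) = (j : ℕ) + 1 ∧ (j : ℕ) + 1 < N then -dcoef m (p : ℕ) (t : ℕ) else 0) := by
    intro t
    have ht := t.2
    rw [dop_entry, LN_entry]
    unfold lent
    split_ifs <;> first | ring1 | (exfalso; omega)
  rw [Finset.sum_congr rfl (fun t _ => hstep t)]
  simp only [Finset.sum_add_distrib]
  rw [sum_ite_nat' (M := N) (j : ℕ) _ (fun x => dcoef m (p : ℕ) x),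
    sum_ite_nat' (M := N) (j : ℕ) _ (fun x => dcoef m (p : ℕ) x),
    sum_ite_nat' (M := N) ((j : ℕ) - 1) _ (fun x => -dcoef m (p : ℕ) x),
    sum_ite_nat' (M := N) ((j : ℕ) + 1) _ (fun x => -dcoef m (p : ℕ) x)]
  split_ifs <;> first | ring1 | (exfalso; omega)

end KTF

namespace KTF
variable {N : ℕ}

lemma dcoef_rec2 (m r j : ℕ) :
    dcoef (m + 2) r j = dcoef m (r + 2) j - 2 * dcoef m (r + 1) j + dcoef m r j := by
  rw [show m + 2 = (m + 1) + 1 by rfl, dcoef_rec, dcoef_rec, dcoef_rec]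
  ring

lemma Tlemma (m r j : ℕ) (hj : j < N) (hr : r + m + 3 ≤ N) :
    (if j + 1 < N then dcoef m (r + 1) j - dcoef m (r + 1) (j + 1) else 0)
      + (if 0 < j then dcoef m (r + 1) j - dcoef m (r + 1) (j - 1) else 0)
    = - dcoef (m + 2) r j := by
  rw [dcoef_rec2]
  have e1 : dcoef m (r + 1) (j + 1) = dcoef m r j := dcoef_shift m r j
  by_cases h0 : 0 < j
  · have e2 : dcoef m (r + 1) (j - 1) = dcoef m (r + 2) j := by
      rw [show dcoef m (r + 2) j = dcoef m ((r + 1) + 1) ((j - 1) + 1) by congr 1; omega,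
        dcoef_shift]
    rw [if_pos h0, e2]
    by_cases h1 : j + 1 < N
    · rw [if_pos h1, e1]; ring
    · rw [if_neg h1]
      have z1 : dcoef m (r + 1) j = 0 := dcoef_eq_zero_of_gt (by omega)
      have z2 : dcoef m r j = 0 := dcoef_eq_zero_of_gt (by omega)
      rw [z1, z2]; ring
  · have hj0 : j = 0 := by omega
    subst hj0
    rw [if_neg h0, if_pos (by omega), e1]
    have z1 : dcoef m (r + 1) 0 = 0 := dcoef_eq_zero_of_lt (by omega)
    have z2 : dcoef m (r + 2) 0 = 0 := dcoef_eq_zero_of_lt (by omega)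
    rw [z1, z2]; ring

lemma rowM (m : ℕ) (hm : m + 3 ≤ N) (r : Fin (N - (m + 2))) (j : Fin N) :
    (Dop N m * LN N) ⟨(r : ℕ) + 1, by have := r.2; omega⟩ j = - Dop N (m + 2) r j := by
  rw [mul_LN_entry, dop_entry]
  exact Tlemma m (r : ℕ) (j : ℕ) j.2 (by have := r.2; omega)

lemma sum_split {M : ℕ} (hM : 2 ≤ M) (f : Fin M → ℝ) :
    ∑ r, f r = f ⟨0, by omega⟩ + (∑ r : Fin (M - 2), f ⟨(r : ℕ) + 1, by have := r.2; omega⟩)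
      + f ⟨M - 1, by omega⟩ := by
  obtain ⟨K, rfl⟩ : ∃ K, M = K + 2 := ⟨M - 2, by omega⟩
  set F : ℕ → ℝ := fun i => if h : i < K + 2 then f ⟨i, h⟩ else 0 with hF
  have h1 : ∑ r, f r = ∑ i ∈ Finset.range (K + 2), F i := by
    rw [← Fin.sum_univ_eq_sum_range]
    exact Finset.sum_congr rfl fun r _ => by simp [hF, r.2]
  rw [h1, Finset.sum_range_succ, Finset.sum_range_succ']
  have h2 : ∑ i ∈ Finset.range K, F (i + 1) = ∑ r : Fin (K + 2 - 2), f ⟨(r : ℕ) + 1, by have := r.2; omega⟩ := by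
    rw [← Fin.sum_univ_eq_sum_range (fun i => F (i + 1)) K]
    exact Finset.sum_congr rfl fun r _ => by
      have : (r : ℕ) + 1 < K + 2 := by have := r.2; omega
      simp [hF, this]
  rw [h2]
  have h3 : F 0 = f ⟨0, by omega⟩ := by simp [hF]
  have h4 : F (K + 1) = f ⟨K + 2 - 1, by omega⟩ := by simp [hF]
  rw [h3, h4]; ring

lemma key (m : ℕ) (hm : m + 3 ≤ N) : ∀ x : Fin N → ℝ,
    (Dop N m *ᵥ (LN N *ᵥ x)) ⬝ᵥ (Dop N m *ᵥ (LN N *ᵥ x))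
      = ((Dop N (m + 2) *ᵥ x) ⬝ᵥ (Dop N (m + 2) *ᵥ x)) + ((fun j => (Dop N m * LN N) ⟨0, by omega⟩ j) ⬝ᵥ x) ^ 2
        + ((fun j => (Dop N m * LN N) ⟨N - m - 1, by omega⟩ j) ⬝ᵥ x) ^ 2 := by
  intro x
  rw [Matrix.mulVec_mulVec]
  have hdot : ∀ {n : ℕ} (v : Fin n → ℝ), v ⬝ᵥ v = ∑ i, (v i) ^ 2 := fun v => by
    simp [dotProduct, sq]
  rw [hdot, hdot]
  have hsplit := sum_split (M := N - m) (by omega) (fun p => (((Dop N m * LN N) *ᵥ x) p) ^ 2)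
  rw [hsplit]
  have hmid : ∀ r : Fin (N - m - 2),
      (((Dop N m * LN N) *ᵥ x) ⟨(r : ℕ) + 1, by have := r.2; omega⟩) ^ 2
        = ((Dop N (m + 2) *ᵥ x) r) ^ 2 := by
    intro r
    have : ((Dop N m * LN N) *ᵥ x) ⟨(r : ℕ) + 1, by have := r.2; omega⟩
        = - ((Dop N (m + 2) *ᵥ x) r) := by
      show (∑ j, (Dop N m * LN N) _ j * x j) = -(∑ j, Dop N (m + 2) r j * x j)
      rw [← Finset.sum_neg_distrib]
      refine Finset.sum_congr rfl fun j _ => ?_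
      rw [rowM m hm r j]; ring
    rw [this]; ring
  rw [Finset.sum_congr rfl fun r _ => hmid r]
  have hb : ∀ (p : Fin (N - m)), ((Dop N m * LN N) *ᵥ x) p = (fun j => (Dop N m * LN N) p j) ⬝ᵥ x := fun p => rfl
  rw [hb, hb]
  have hcast : (∑ r : Fin (N - m - 2), ((Dop N (m + 2) *ᵥ x) r) ^ 2)
      = ∑ r : Fin (N - (m + 2)), ((Dop N (m + 2) *ᵥ x) r) ^ 2 := rfl
  rw [hcast]
  ring

end KTF

namespace KTF
variable {N : ℕ}

lemma dot_transpose {a b : ℕ} (x : Fin a → ℝ) (A : Matrix (Fin b) (Fin a) ℝ) (y : Fin b → ℝ) :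
    x ⬝ᵥ (Aᵀ *ᵥ y) = (A *ᵥ x) ⬝ᵥ y := by
  rw [Matrix.dotProduct_mulVec, Matrix.vecMul_transpose]

lemma dot_LN_aux (x y : Fin N → ℝ) : x ⬝ᵥ (LN N *ᵥ y) = (D1 N *ᵥ x) ⬝ᵥ (D1 N *ᵥ y) := by
  show x ⬝ᵥ (((D1 N)ᵀ * D1 N) *ᵥ y) = _
  rw [← Matrix.mulVec_mulVec, dot_transpose]

lemma dot_LN (x y : Fin N → ℝ) : x ⬝ᵥ (LN N *ᵥ y) = (LN N *ᵥ x) ⬝ᵥ y := by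
  rw [dot_LN_aux, show (LN N *ᵥ x) ⬝ᵥ y = y ⬝ᵥ (LN N *ᵥ x) from dotProduct_comm _ _,
    dot_LN_aux, dotProduct_comm]

lemma dop0_mulVec (x : Fin N → ℝ) : Dop N 0 *ᵥ x = x := by
  funext i
  show (∑ j : Fin N, (if ((i : Fin (N - 0)) : ℕ) = (j : ℕ) then (1:ℝ) else 0) * x j) = x i
  rw [Finset.sum_eq_single (⟨(i : ℕ), by have := i.2; omega⟩ : Fin N)]
  · simp
  · intro b _ hb
    rw [if_neg (fun h => hb (Fin.ext h.symm))]
    ring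
  · simp

lemma dop1_mulVec (x : Fin N → ℝ) : Dop N 1 *ᵥ x = D1 N *ᵥ x := by
  show (D1 (N - 0) * Dop N 0) *ᵥ x = _
  rw [← Matrix.mulVec_mulVec, dop0_mulVec]
  rfl

lemma Pm : ∀ (m : ℕ), m + 1 ≤ N → ∃ B : Fin m → (Fin N → ℝ), ∀ x : Fin N → ℝ,
    x ⬝ᵥ ((LN N ^ m) *ᵥ x) = (Dop N m *ᵥ x) ⬝ᵥ (Dop N m *ᵥ x) + ∑ b, (B b ⬝ᵥ x) ^ 2
  | 0, hm => by
    refine ⟨fun _ => 0, fun x => ?_⟩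
    rw [pow_zero, Matrix.one_mulVec, dop0_mulVec]
    simp
  | 1, hm => by
    refine ⟨fun _ => 0, fun x => ?_⟩
    rw [pow_one, dop1_mulVec]
    show x ⬝ᵥ (((D1 N)ᵀ * D1 N) *ᵥ x) = _
    rw [← Matrix.mulVec_mulVec, dot_transpose]
    simp
  | (m + 2), hm => by
    obtain ⟨B, hB⟩ := Pm m (by omega)
    refine ⟨Fin.cons (fun j => (Dop N m * LN N) ⟨0, by omega⟩ j)
      (Fin.cons (fun j => (Dop N m * LN N) ⟨N - m - 1, by omega⟩ j)
        (fun b => LN N *ᵥ B b)), fun x => ?_⟩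
    have hpow : LN N ^ (m + 2) = LN N * (LN N ^ m * LN N) := by
      rw [pow_succ, pow_succ', mul_assoc]
    rw [hpow, ← Matrix.mulVec_mulVec, dot_LN, ← Matrix.mulVec_mulVec, hB (LN N *ᵥ x),
      key m (by omega) x]
    rw [Fin.sum_univ_succ, Fin.sum_univ_succ]
    simp only [Fin.cons_zero, Fin.cons_succ]
    have hrw : ∀ b : Fin m, B b ⬝ᵥ (LN N *ᵥ x) = (LN N *ᵥ B b) ⬝ᵥ x := fun b => by
      rw [dot_LN]
    rw [Finset.sum_congr rfl fun b _ => by rw [hrw b]]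
    ring

end KTF

namespace KTF
variable {N : ℕ}

def alphaF (N t : ℕ) : ℝ := 4 * Real.sin (Real.pi * t / (2 * N)) ^ 2

def cvec (N t : ℕ) : Fin N → ℝ :=
  fun j => Real.cos ((2 * (j : ℕ) + 1) * (Real.pi * t / (2 * N)))

lemma LN_mulVec (x : Fin N → ℝ) (j : Fin N) :
    (LN N *ᵥ x) j = (if h : (j : ℕ) + 1 < N then x j - x ⟨(j : ℕ) + 1, h⟩ else 0)
      + (if h : 0 < (j : ℕ) then x j - x ⟨(j : ℕ) - 1, by have := j.2; omega⟩ else 0) := by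
  have hj := j.2
  set F : ℕ → ℝ := fun n => if hn : n < N then x ⟨n, hn⟩ else 0 with hF
  show (∑ b : Fin N, LN N j b * x b) = _
  have hstep : ∀ b : Fin N, LN N j b * x b =
      (if (b : ℕ) = (j : ℕ) ∧ (j : ℕ) + 1 < N then F (b : ℕ) else 0)
      + (if (b : ℕ) = (j : ℕ) ∧ 0 < (j : ℕ) then F (b : ℕ) else 0)
      + (if (b : ℕ) = (j : ℕ) + 1 ∧ (j : ℕ) + 1 < N then -F (b : ℕ) else 0)
      + (if (b : ℕ) = (j : ℕ) - 1 ∧ 0 < (j : ℕ) then -F (b : ℕ) else 0) := by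
    intro b
    have hb := b.2
    have hFb : F (b : ℕ) = x b := by simp [hF, hb]
    rw [LN_entry, hFb]
    unfold lent
    split_ifs <;> first | ring1 | (exfalso; omega)
  rw [Finset.sum_congr rfl (fun b _ => hstep b)]
  simp only [Finset.sum_add_distrib]
  rw [sum_ite_nat' (M := N) (j : ℕ) _ F, sum_ite_nat' (M := N) (j : ℕ) _ F,
    sum_ite_nat' (M := N) ((j : ℕ) + 1) _ (fun n => -F n),
    sum_ite_nat' (M := N) ((j : ℕ) - 1) _ (fun n => -F n)]
  have e1 : F (j : ℕ) = x j := by simp [hF, hj]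
  by_cases h1 : (j : ℕ) + 1 < N
  · have e2 : F ((j : ℕ) + 1) = x ⟨(j : ℕ) + 1, h1⟩ := by simp [hF, h1]
    by_cases h2 : 0 < (j : ℕ)
    · have e3 : F ((j : ℕ) - 1) = x ⟨(j : ℕ) - 1, by omega⟩ := by simp [hF, show (j:ℕ)-1 < N by omega]
      rw [dif_pos h1, dif_pos h2]
      rw [if_pos ⟨by omega, h1⟩, if_pos ⟨by omega, h2⟩, if_pos ⟨h1, h1⟩, if_pos ⟨by omega, h2⟩,
        e1, e2, e3]
      ring
    · rw [dif_pos h1, dif_neg h2, if_pos ⟨by omega, h1⟩, if_neg (by omega), if_pos ⟨h1, h1⟩,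
        if_neg (by omega), e1, e2]
      ring
  · by_cases h2 : 0 < (j : ℕ)
    · have e3 : F ((j : ℕ) - 1) = x ⟨(j : ℕ) - 1, by omega⟩ := by simp [hF, show (j:ℕ)-1 < N by omega]
      rw [dif_neg h1, dif_pos h2, if_neg (by omega), if_pos ⟨by omega, h2⟩, if_neg (by omega),
        if_pos ⟨by omega, h2⟩, e1, e3]
      ring
    · rw [dif_neg h1, dif_neg h2, if_neg (by omega), if_neg (by omega), if_neg (by omega),
        if_neg (by omega)]
      ring

lemma trig1 (θ a : ℝ) :
    2 * Real.cos a - Real.cos (a + 2 * θ) - Real.cos (a - 2 * θ)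
      = 4 * Real.sin θ ^ 2 * Real.cos a := by
  rw [Real.cos_add, Real.cos_sub, Real.cos_two_mul]
  linear_combination (-4 * Real.cos a) * Real.sin_sq_add_cos_sq θ

lemma LN_mulVec_cvec (hN : 2 ≤ N) (t : ℕ) :
    LN N *ᵥ cvec N t = alphaF N t • cvec N t := by
  funext j
  have hj := j.2
  set θ : ℝ := Real.pi * t / (2 * N) with hθ
  rw [LN_mulVec]
  show _ = alphaF N t * cvec N t j
  by_cases h1 : (j : ℕ) + 1 < N
  · by_cases h2 : 0 < (j : ℕ)
    · -- interior
      rw [dif_pos h1, dif_pos h2]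
      have ha1 : cvec N t ⟨(j : ℕ) + 1, h1⟩ = Real.cos ((2 * (j : ℝ) + 1) * θ + 2 * θ) := by
        show Real.cos _ = _
        congr 1
        push_cast
        ring
      have ha2 : cvec N t ⟨(j : ℕ) - 1, by omega⟩ = Real.cos ((2 * (j : ℝ) + 1) * θ - 2 * θ) := by
        show Real.cos _ = _
        congr 1
        have : (((j : ℕ) - 1 : ℕ) : ℝ) = (j : ℝ) - 1 := by
          rw [Nat.cast_sub (by omega)]; norm_num
        rw [this]
        ring
      have hcj : cvec N t j = Real.cos ((2 * (j : ℝ) + 1) * θ) := rfl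
      rw [ha1, ha2, hcj]
      unfold alphaF
      rw [← hθ]
      linarith [trig1 θ ((2 * (j : ℝ) + 1) * θ)]
    · -- j = 0
      have hj0 : (j : ℕ) = 0 := by omega
      rw [dif_pos h1, dif_neg h2]
      have hcj : cvec N t j = Real.cos ((2 * (j : ℝ) + 1) * θ) := rfl
      have ha1 : cvec N t ⟨(j : ℕ) + 1, h1⟩ = Real.cos ((2 * (j : ℝ) + 1) * θ + 2 * θ) := by
        show Real.cos _ = _
        congr 1
        push_cast
        ring
      rw [ha1, hcj]
      unfold alphaF
      rw [← hθ]
      have key := trig1 θ ((2 * (j : ℝ) + 1) * θ)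
      have hjr : ((j : ℕ) : ℝ) = 0 := by rw [hj0]; norm_num
      have hcos : Real.cos ((2 * (j : ℝ) + 1) * θ - 2 * θ) = Real.cos ((2 * (j : ℝ) + 1) * θ) := by
        rw [hjr, show (2 * (0:ℝ) + 1) * θ - 2 * θ = -θ by ring, Real.cos_neg]
        congr 1
        ring
      rw [hcos] at key
      linarith
  · by_cases h2 : 0 < (j : ℕ)
    · -- j = N - 1
      have hjN : (j : ℕ) = N - 1 := by omega
      have hjr : ((j : ℕ) : ℝ) = (N : ℝ) - 1 := by
        rw [hjN, Nat.cast_sub (by omega)]; norm_num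
      rw [dif_neg h1, dif_pos h2]
      have hNne : (2 : ℝ) * (N : ℝ) ≠ 0 := by positivity
      have hNθ : 2 * (N : ℝ) * θ = Real.pi * t := by
        rw [hθ]; field_simp
      have hcj : cvec N t j = Real.cos ((2 * (j : ℝ) + 1) * θ) := rfl
      have ha2 : cvec N t ⟨(j : ℕ) - 1, by omega⟩ = Real.cos ((2 * (j : ℝ) + 1) * θ - 2 * θ) := by
        show Real.cos _ = _
        congr 1
        have : (((j : ℕ) - 1 : ℕ) : ℝ) = (j : ℝ) - 1 := by
          rw [Nat.cast_sub (by omega)]; norm_num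
        rw [this]
        ring
      have hsym : Real.cos ((t : ℝ) * Real.pi + θ) = Real.cos ((t : ℝ) * Real.pi - θ) := by
        rw [Real.cos_add, Real.cos_sub, Real.sin_nat_mul_pi]
        ring
      have ep : (2 * (j : ℝ) + 1) * θ + 2 * θ = (t : ℝ) * Real.pi + θ := by
        rw [hjr]; linear_combination hNθ
      have em : (2 * (j : ℝ) + 1) * θ = (t : ℝ) * Real.pi - θ := by
        rw [hjr]; linear_combination hNθ
      have key := trig1 θ ((2 * (j : ℝ) + 1) * θ)
      rw [ep] at key
      rw [hsym, ← em] at key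
      rw [hcj, ha2]
      unfold alphaF
      rw [← hθ]
      linarith
    · exfalso; omega

end KTF

namespace KTF

lemma finrank_ker_pi {n : ℕ} {ι : Type} [Fintype ι] [DecidableEq ι]
    (φ : ι → ((Fin n → ℝ) →ₗ[ℝ] ℝ)) :
    n ≤ Module.finrank ℝ (LinearMap.ker (LinearMap.pi φ)) + Fintype.card ι := by
  have h := LinearMap.finrank_range_add_finrank_ker (LinearMap.pi φ)
  have h2 : Module.finrank ℝ (LinearMap.range (LinearMap.pi φ)) ≤ Fintype.card ι := by
    have := Submodule.finrank_le (LinearMap.range (LinearMap.pi φ))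
    simpa using this
  have h3 : Module.finrank ℝ (Fin n → ℝ) = n := by simp
  omega

lemma star_mulVec_eq_vecMul {n : ℕ} (U : Matrix (Fin n) (Fin n) ℝ) (x : Fin n → ℝ) :
    (star U) *ᵥ x = x ᵥ* U := by
  funext j
  show (∑ i, (star U) j i * x i) = ∑ i, x i * U i j
  refine Finset.sum_congr rfl fun i _ => ?_
  have : (star U) j i = U i j := by
    show Uᴴ j i = U i j
    rw [Matrix.conjTranspose_apply, star_trivial]
  rw [this]; ring

lemma dot_mulVec_star {n : ℕ} (U : Matrix (Fin n) (Fin n) ℝ) (x : Fin n → ℝ) (z : Fin n → ℝ) :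
    x ⬝ᵥ (U *ᵥ z) = ((star U) *ᵥ x) ⬝ᵥ z := by
  rw [Matrix.dotProduct_mulVec, star_mulVec_eq_vecMul]

lemma dot_self_pos {n : ℕ} {x : Fin n → ℝ} (hx : x ≠ 0) : 0 < x ⬝ᵥ x := by
  obtain ⟨i, hi⟩ : ∃ i, x i ≠ 0 := by
    by_contra h
    push_neg at h
    exact hx (funext h)
  refine Finset.sum_pos' (fun j _ => mul_self_nonneg _)
    ⟨i, Finset.mem_univ i, mul_self_pos.mpr hi⟩

lemma minmax {n : ℕ} (A : Matrix (Fin n) (Fin n) ℝ) (hA : A.IsHermitian)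
    (ρ : Fin n → ℝ) (hmono : Monotone ρ) (σ : Equiv.Perm (Fin n))
    (hσ : ∀ i, ρ i = hA.eigenvalues (σ i))
    (ℓ : Fin n) (c : ℝ) (V : Submodule ℝ (Fin n → ℝ))
    (hdim : n ≤ (ℓ : ℕ) + Module.finrank ℝ V)
    (hq : ∀ x ∈ V, c * (x ⬝ᵥ x) ≤ x ⬝ᵥ (A *ᵥ x)) : c ≤ ρ ℓ := by
  classical
  set U : Matrix (Fin n) (Fin n) ℝ := (hA.eigenvectorUnitary : Matrix (Fin n) (Fin n) ℝ) with hU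
  set μ : Fin n → ℝ := hA.eigenvalues with hμ
  have hUU : U * star U = 1 := (Matrix.mem_unitaryGroup_iff).mp hA.eigenvectorUnitary.2
  have spec : A = U * Matrix.diagonal μ * star U := by
    have h := hA.spectral_theorem
    rwa [RCLike.ofReal_real_eq_id, Function.id_comp] at h
  -- the subspace W of vectors orthogonal to high-index eigenvectors
  set φ : {t : Fin n // ℓ < t} → ((Fin n → ℝ) →ₗ[ℝ] ℝ) := fun t =>
    (LinearMap.proj (σ t.1)).comp (Matrix.mulVecLin (star U)) with hφ
  set W : Submodule ℝ (Fin n → ℝ) := LinearMap.ker (LinearMap.pi φ) with hW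
  have hcard : Fintype.card {t : Fin n // ℓ < t} = n - 1 - (ℓ : ℕ) := by
    rw [Fintype.card_subtype]
    have hfe : Finset.filter (fun x => ℓ < x) Finset.univ = Finset.Ioi ℓ := by
      ext t; simp
    rw [hfe]
    exact Fin.card_Ioi ℓ
  have hWrank : n ≤ Module.finrank ℝ W + (n - 1 - (ℓ : ℕ)) := by
    have := finrank_ker_pi φ
    rwa [hcard] at this
  -- find a nonzero vector in W ⊓ V
  have hsum := Submodule.finrank_sup_add_finrank_inf_eq W V
  have hle : Module.finrank ℝ ↥(W ⊔ V) ≤ n := by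
    have := Submodule.finrank_le (W ⊔ V)
    simpa using this
  have hpos : 0 < Module.finrank ℝ ↥(W ⊓ V) := by
    have hl := ℓ.2
    omega
  obtain ⟨x, hxWV, hx0⟩ : ∃ x, x ∈ W ⊓ V ∧ x ≠ 0 := by
    refine Submodule.exists_mem_ne_zero_of_ne_bot fun hbot => ?_
    rw [hbot, finrank_bot] at hpos
    exact lt_irrefl 0 hpos
  obtain ⟨hxW, hxV⟩ := hxWV
  set y : Fin n → ℝ := (star U) *ᵥ x with hy
  have hy0 : ∀ t : Fin n, ℓ < t → y (σ t) = 0 := by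
    intro t ht
    have hfn : (LinearMap.pi φ) x = 0 := hxW
    have h2 := congrFun hfn ⟨t, ht⟩
    simpa [hφ, hy, LinearMap.pi_apply] using h2
  have hAx : x ⬝ᵥ (A *ᵥ x) = ∑ i, μ i * (y i) ^ 2 := by
    rw [spec, ← Matrix.mulVec_mulVec, ← Matrix.mulVec_mulVec, dot_mulVec_star, ← hy]
    show y ⬝ᵥ (Matrix.diagonal μ *ᵥ y) = _
    refine Finset.sum_congr rfl fun i _ => ?_
    rw [Matrix.mulVec_diagonal]
    ring
  have hxx : x ⬝ᵥ x = ∑ i, (y i) ^ 2 := by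
    have h1 : x ⬝ᵥ x = y ⬝ᵥ y := by
      have h2 : x ⬝ᵥ (U *ᵥ y) = y ⬝ᵥ y := dot_mulVec_star U x y
      rw [← h2, hy, Matrix.mulVec_mulVec, hUU, Matrix.one_mulVec]
    rw [h1]
    refine Finset.sum_congr rfl fun i _ => ?_
    ring
  have hsum2 : ∑ i, μ i * (y i) ^ 2 = ∑ t, ρ t * (y (σ t)) ^ 2 := by
    rw [← Equiv.sum_comp σ (fun i => μ i * (y i) ^ 2)]
    exact Finset.sum_congr rfl fun t _ => by rw [hσ t]
  have hbound : ∑ t, ρ t * (y (σ t)) ^ 2 ≤ ρ ℓ * (x ⬝ᵥ x) := by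
    rw [hxx, ← Equiv.sum_comp σ (fun i => (y i) ^ 2), Finset.mul_sum]
    refine Finset.sum_le_sum fun t _ => ?_
    rcases le_or_gt t ℓ with h | h
    · exact mul_le_mul_of_nonneg_right (hmono h) (sq_nonneg _)
    · rw [hy0 t h]
      simp
  have hc := hq x hxV
  rw [hAx, hsum2] at hc
  have hfinal : c * (x ⬝ᵥ x) ≤ ρ ℓ * (x ⬝ᵥ x) := le_trans hc hbound
  exact le_of_mul_le_mul_right hfinal (dot_self_pos hx0)

end KTF

namespace KTF
variable {N : ℕ}

lemma alphaF_nonneg (N t : ℕ) : 0 ≤ alphaF N t := by unfold alphaF; positivity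

lemma sin_arg_bounds (hN : 0 < N) {t : ℕ} (ht : t < N) :
    0 ≤ Real.pi * t / (2 * N) ∧ Real.pi * t / (2 * N) < Real.pi / 2 := by
  have hpi := Real.pi_pos
  have hb : (0:ℝ) < 2 * N := by positivity
  constructor
  · positivity
  · rw [div_lt_div_iff₀ hb (by norm_num)]
    have h1 : (t : ℝ) < (N : ℝ) := by exact_mod_cast ht
    nlinarith

lemma alphaF_mono (hN : 0 < N) {s t : ℕ} (h : s ≤ t) (ht : t < N) :
    alphaF N s ≤ alphaF N t := by
  unfold alphaF
  obtain ⟨h0s, h2s⟩ := sin_arg_bounds hN (lt_of_le_of_lt h ht)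
  obtain ⟨h0t, h2t⟩ := sin_arg_bounds hN ht
  have hpi := Real.pi_pos
  have hb : (0:ℝ) < 2 * N := by positivity
  have hargle : Real.pi * s / (2 * N) ≤ Real.pi * t / (2 * N) := by
    rw [div_le_div_iff₀ hb hb]
    have hst : (s:ℝ) ≤ (t:ℝ) := by exact_mod_cast h
    have h1 : Real.pi * s ≤ Real.pi * t := mul_le_mul_of_nonneg_left hst (le_of_lt hpi)
    exact mul_le_mul_of_nonneg_right h1 (le_of_lt hb)
  have hsle : Real.sin (Real.pi * s / (2 * N)) ≤ Real.sin (Real.pi * t / (2 * N)) :=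
    Real.sin_le_sin_of_le_of_le_pi_div_two (by linarith) (le_of_lt h2t) hargle
  have hs0 : 0 ≤ Real.sin (Real.pi * s / (2 * N)) :=
    Real.sin_nonneg_of_nonneg_of_le_pi h0s (by linarith)
  nlinarith

lemma alphaF_strict_mono (hN : 0 < N) {s t : ℕ} (h : s < t) (ht : t < N) :
    alphaF N s < alphaF N t := by
  unfold alphaF
  obtain ⟨h0s, h2s⟩ := sin_arg_bounds hN (lt_trans h ht)
  obtain ⟨h0t, h2t⟩ := sin_arg_bounds hN ht
  have hpi := Real.pi_pos
  have hb : (0:ℝ) < 2 * N := by positivity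
  have harglt : Real.pi * s / (2 * N) < Real.pi * t / (2 * N) := by
    rw [div_lt_div_iff₀ hb hb]
    have hst : (s:ℝ) < (t:ℝ) := by exact_mod_cast h
    have h1 : Real.pi * s < Real.pi * t := mul_lt_mul_of_pos_left hst hpi
    exact mul_lt_mul_of_pos_right h1 hb
  have hslt : Real.sin (Real.pi * s / (2 * N)) < Real.sin (Real.pi * t / (2 * N)) :=
    Real.sin_lt_sin_of_lt_of_le_pi_div_two (by linarith) (le_of_lt h2t) harglt
  have hs0 : 0 ≤ Real.sin (Real.pi * s / (2 * N)) :=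
    Real.sin_nonneg_of_nonneg_of_le_pi h0s (by linarith)
  nlinarith

end KTF

namespace KTF
variable {N : ℕ}

lemma cvec_ne_zero (hN : 0 < N) {t : ℕ} (ht : t < N) : cvec N t ≠ 0 := by
  intro h
  have h0 := congrFun h ⟨0, hN⟩
  obtain ⟨ha, hb⟩ := sin_arg_bounds hN ht
  have : cvec N t ⟨0, hN⟩ = Real.cos (Real.pi * t / (2 * N)) := by
    show Real.cos _ = _
    norm_num
  rw [this] at h0
  have hpos : 0 < Real.cos (Real.pi * t / (2 * N)) :=
    Real.cos_pos_of_mem_Ioo ⟨by have := Real.pi_pos; linarith, hb⟩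
  simp at h0
  linarith

lemma sum_smul_dot {ι : Type*} (s : Finset ι) (g : ι → ℝ) (v : ι → Fin N → ℝ) (u : Fin N → ℝ) :
    (∑ j ∈ s, g j • v j) ⬝ᵥ u = ∑ j ∈ s, g j * (v j ⬝ᵥ u) := by
  simp only [dotProduct, Finset.sum_apply, Pi.smul_apply, smul_eq_mul, Finset.sum_mul,
    Finset.mul_sum]
  rw [Finset.sum_comm]
  exact Finset.sum_congr rfl fun j _ => Finset.sum_congr rfl fun a _ => by ring

lemma dot_sum_smul {ι : Type*} (s : Finset ι) (g : ι → ℝ) (v : ι → Fin N → ℝ) (u : Fin N → ℝ) :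
    u ⬝ᵥ (∑ j ∈ s, g j • v j) = ∑ j ∈ s, g j * (u ⬝ᵥ v j) := by
  rw [dotProduct_comm, sum_smul_dot]
  exact Finset.sum_congr rfl fun j _ => by rw [dotProduct_comm]

lemma cvec_dot_eq_zero (hN : 2 ≤ N) {s t : ℕ} (hs : s < N) (ht : t < N) (hst : s ≠ t) :
    cvec N s ⬝ᵥ cvec N t = 0 := by
  have h1 : cvec N s ⬝ᵥ (LN N *ᵥ cvec N t) = alphaF N t * (cvec N s ⬝ᵥ cvec N t) := by
    rw [LN_mulVec_cvec hN t]
    simp [dotProduct_smul]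
  have h2 : cvec N s ⬝ᵥ (LN N *ᵥ cvec N t) = alphaF N s * (cvec N s ⬝ᵥ cvec N t) := by
    rw [dot_LN, LN_mulVec_cvec hN s]
    simp [smul_dotProduct]
  have hne : alphaF N s ≠ alphaF N t := by
    rcases lt_or_gt_of_ne hst with h | h
    · exact ne_of_lt (alphaF_strict_mono (by omega) h ht)
    · exact (ne_of_lt (alphaF_strict_mono (by omega) h hs)).symm
  have h3 : (alphaF N t - alphaF N s) * (cvec N s ⬝ᵥ cvec N t) = 0 := by linarith
  rcases mul_eq_zero.mp h3 with h | h
  · exfalso; exact hne (by linarith)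
  · exact h

lemma cvec_li (hN : 2 ≤ N) : LinearIndependent ℝ (fun t : Fin N => cvec N (t : ℕ)) := by
  rw [linearIndependent_iff']
  intro sset g hsum i hi
  have hdot : (∑ j ∈ sset, g j • cvec N (j : ℕ)) ⬝ᵥ cvec N (i : ℕ) = 0 := by
    rw [hsum]; simp
  rw [sum_smul_dot] at hdot
  rw [Finset.sum_eq_single i] at hdot
  · have hw : 0 < cvec N (i : ℕ) ⬝ᵥ cvec N (i : ℕ) :=
      dot_self_pos (cvec_ne_zero (by omega) i.2)
    rcases mul_eq_zero.mp hdot with h | h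
    · exact h
    · exfalso; linarith
  · intro b _ hb
    rw [cvec_dot_eq_zero hN b.2 i.2 (fun hh => hb (Fin.ext hh))]
    ring
  · intro hnot; exact absurd hi hnot

lemma cvec_span (hN : 2 ≤ N) (x : Fin N → ℝ) :
    ∃ c : Fin N → ℝ, x = ∑ t, c t • cvec N (t : ℕ) := by
  have hli := cvec_li hN
  have hne : Nonempty (Fin N) := ⟨⟨0, by omega⟩⟩
  have htop := hli.span_eq_top_of_card_eq_finrank (by simp)
  have hx : x ∈ Submodule.span ℝ (Set.range (fun t : Fin N => cvec N (t : ℕ))) := by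
    rw [htop]; trivial
  obtain ⟨c, hc⟩ := (Submodule.mem_span_range_iff_exists_fun ℝ).mp hx
  exact ⟨c, hc.symm⟩

lemma pow_mulVec_cvec (hN : 2 ≤ N) (p t : ℕ) :
    (LN N ^ p) *ᵥ cvec N t = (alphaF N t) ^ p • cvec N t := by
  induction p with
  | zero => simp
  | succ p ih =>
    rw [pow_succ', ← Matrix.mulVec_mulVec, ih, Matrix.mulVec_smul, LN_mulVec_cvec hN t,
      smul_smul, pow_succ', mul_comm]

lemma vhigh_bound (hN : 2 ≤ N) (p m : ℕ) (hm : m < N) (x : Fin N → ℝ)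
    (hx : ∀ t : Fin N, (t : ℕ) < m → cvec N (t : ℕ) ⬝ᵥ x = 0) :
    alphaF N m ^ p * (x ⬝ᵥ x) ≤ x ⬝ᵥ ((LN N ^ p) *ᵥ x) := by
  obtain ⟨c, hc⟩ := cvec_span hN x
  set v : Fin N → Fin N → ℝ := fun t => cvec N (t : ℕ) with hv
  have horth : ∀ s t : Fin N, s ≠ t → v s ⬝ᵥ v t = 0 := fun s t h =>
    cvec_dot_eq_zero hN s.2 t.2 (fun hh => h (Fin.ext hh))
  have hdot_expand : ∀ (a b : Fin N → ℝ),
      (∑ s, a s • v s) ⬝ᵥ (∑ t, b t • v t) = ∑ t, (a t * b t) * (v t ⬝ᵥ v t) := by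
    intro a b
    rw [sum_smul_dot]
    refine Finset.sum_congr rfl fun s _ => ?_
    rw [dot_sum_smul, Finset.sum_eq_single s]
    · ring
    · intro b' _ hb'; rw [horth s b' (fun hh => hb' hh.symm)]; ring
    · intro hnot; exact absurd (Finset.mem_univ s) hnot
  have hct : ∀ t : Fin N, (t : ℕ) < m → c t = 0 := by
    intro t ht
    have h0 := hx t ht
    rw [hc, dot_sum_smul, Finset.sum_eq_single t] at h0
    · have hw : 0 < v t ⬝ᵥ v t := dot_self_pos (cvec_ne_zero (by omega) t.2)
      rcases mul_eq_zero.mp h0 with h | h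
      · exact h
      · exfalso
        rw [dotProduct_comm] at h
        exact absurd h (ne_of_gt hw)
    · intro b _ hb
      rw [dotProduct_comm, horth b t (fun hh => hb hh)]
      ring
    · intro hnot; exact absurd (Finset.mem_univ t) hnot
  have hLp : (LN N ^ p) *ᵥ x = ∑ t, (c t * alphaF N (t : ℕ) ^ p) • v t := by
    rw [hc, ← Matrix.mulVecLin_apply, map_sum]
    refine Finset.sum_congr rfl fun t _ => ?_
    rw [LinearMap.map_smul, Matrix.mulVecLin_apply, pow_mulVec_cvec hN, smul_smul]
  have hxLp : x ⬝ᵥ ((LN N ^ p) *ᵥ x)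
      = ∑ t, (c t * (c t * alphaF N (t : ℕ) ^ p)) * (v t ⬝ᵥ v t) := by
    rw [hLp]
    nth_rewrite 1 [hc]
    exact hdot_expand c (fun t => c t * alphaF N (t : ℕ) ^ p)
  have hxx : x ⬝ᵥ x = ∑ t, (c t * c t) * (v t ⬝ᵥ v t) := by
    nth_rewrite 1 [hc]
    nth_rewrite 1 [hc]
    exact hdot_expand c c
  rw [hxx, hxLp, Finset.mul_sum]
  refine Finset.sum_le_sum fun t _ => ?_
  rcases lt_or_ge (t : ℕ) m with h | h
  · rw [hct t h]; simp
  · have h1 : alphaF N m ^ p ≤ alphaF N (t : ℕ) ^ p :=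
      pow_le_pow_left₀ (alphaF_nonneg N m) (alphaF_mono (by omega) h t.2) p
    have h2 : 0 ≤ (c t * c t) * (v t ⬝ᵥ v t) :=
      mul_nonneg (mul_self_nonneg _) (le_of_lt (dot_self_pos (cvec_ne_zero (by omega) t.2)))
    calc alphaF N m ^ p * ((c t * c t) * (v t ⬝ᵥ v t))
        ≤ alphaF N (t : ℕ) ^ p * ((c t * c t) * (v t ⬝ᵥ v t)) :=
          mul_le_mul_of_nonneg_right h1 h2
      _ = (c t * (c t * alphaF N (t : ℕ) ^ p)) * (v t ⬝ᵥ v t) := by ring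

end KTF

namespace KTF
variable {N : ℕ}

def dotL (v : Fin N → ℝ) : (Fin N → ℝ) →ₗ[ℝ] ℝ where
  toFun x := v ⬝ᵥ x
  map_add' x y := dotProduct_add v x y
  map_smul' a x := by simp

lemma univar (k : ℕ) (hN : k + 1 < N)
    (hH : ((Dop N (k + 1))ᵀ * Dop N (k + 1)).IsHermitian)
    (ρ : Fin N → ℝ) (hmono : Monotone ρ)
    (σ : Equiv.Perm (Fin N)) (hσ : ∀ i, ρ i = hH.eigenvalues (σ i)) (ℓ : Fin N) :
    alphaF N ((ℓ : ℕ) - (k + 1)) ^ (k + 1) ≤ ρ ℓ := by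
  classical
  have hN2 : 2 ≤ N := by omega
  have hquad : ∀ x : Fin N → ℝ, x ⬝ᵥ (((Dop N (k + 1))ᵀ * Dop N (k + 1)) *ᵥ x)
      = (Dop N (k + 1) *ᵥ x) ⬝ᵥ (Dop N (k + 1) *ᵥ x) := by
    intro x
    rw [← Matrix.mulVec_mulVec, dot_transpose]
  by_cases hl : (ℓ : ℕ) < k + 1
  · have hm0 : (ℓ : ℕ) - (k + 1) = 0 := by omega
    rw [hm0]
    have hα : alphaF N 0 = 0 := by simp [alphaF]
    rw [hα, zero_pow (by omega)]
    refine minmax _ hH ρ hmono σ hσ ℓ 0 ⊤ ?_ ?_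
    · have : Module.finrank ℝ (⊤ : Submodule ℝ (Fin N → ℝ)) = N := by simp
      omega
    · intro x _
      rw [hquad, zero_mul]
      exact Finset.sum_nonneg fun i _ => mul_self_nonneg _
  · set m : ℕ := (ℓ : ℕ) - (k + 1) with hm
    have hmlt : m < N := by have := ℓ.2; omega
    obtain ⟨B, hB⟩ := Pm (N := N) (k + 1) (by omega)
    set φ : ({t : Fin N // (t : ℕ) < m} ⊕ Fin (k + 1)) → ((Fin N → ℝ) →ₗ[ℝ] ℝ) :=
      Sum.elim (fun t => dotL (cvec N (t.1 : ℕ))) (fun b => dotL (B b)) with hφ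
    set V : Submodule ℝ (Fin N → ℝ) := LinearMap.ker (LinearMap.pi φ) with hV
    have hcard1 : Fintype.card {t : Fin N // (t : ℕ) < m} = m := by
      rw [Fintype.card_subtype]
      have hfe : Finset.filter (fun t : Fin N => (t : ℕ) < m) Finset.univ
          = Finset.Iio (⟨m, hmlt⟩ : Fin N) := by
        ext t
        simp [Fin.lt_def]
      rw [hfe, Fin.card_Iio]
    have hdim : N ≤ (ℓ : ℕ) + Module.finrank ℝ V := by
      have h1 := finrank_ker_pi φ
      rw [Fintype.card_sum, hcard1, Fintype.card_fin, ← hV] at h1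
      omega
    refine minmax _ hH ρ hmono σ hσ ℓ _ V hdim ?_
    intro x hxV
    have hxcomp : ∀ i, φ i x = 0 := by
      intro i
      exact congrFun (show LinearMap.pi φ x = 0 from hxV) i
    have hx1 : ∀ t : Fin N, (t : ℕ) < m → cvec N (t : ℕ) ⬝ᵥ x = 0 := fun t ht =>
      hxcomp (Sum.inl ⟨t, ht⟩)
    have hx2 : ∀ b : Fin (k + 1), B b ⬝ᵥ x = 0 := fun b => hxcomp (Sum.inr b)
    rw [hquad]
    have hPm := hB x
    have hzero : ∑ b, (B b ⬝ᵥ x) ^ 2 = 0 :=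
      Finset.sum_eq_zero fun b _ => by rw [hx2 b]; ring
    have hvh := vhigh_bound hN2 (k + 1) m hmlt x hx1
    rw [hzero, add_zero] at hPm
    linarith

end KTF

end KTF

open KTF KTF.KTF

/-- Lemma: KTF Gram eigenvalues dominate powers of grid Laplacian
eigenvalues.  Let `ρ_1 ≤ ⋯ ≤ ρ_N` be the increasingly ordered eigenvalues of
`(D_N^{(k+1)})ᵀ D_N^{(k+1)}`, and let `α_ℓ = 4 sin²(π(ℓ-1)/(2N))` be the eigenvalues of
the chain-graph Laplacian, with the convention `α_ℓ = 0` for `ℓ ≤ 0`.  Then for every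
multi-index `i ∈ {1,…,N}^d` (here `0`-indexed, so `α_{i_j-k-1}` becomes the value at the
natural-subtraction index `(i j) - (k+1)`),
`Σ_j ρ_{i_j} ≥ d^{-k} (Σ_j α_{i_j-k-1})^{k+1}`. -/
theorem ktf_eigenvalue_lower_bound (k d N : ℕ) (hd : 1 ≤ d) (hN : k + 1 < N)
    (hH : ((Dop N (k + 1))ᵀ * Dop N (k + 1)).IsHermitian)
    (ρ : Fin N → ℝ) (hmono : Monotone ρ)
    (hperm : ∃ σ : Equiv.Perm (Fin N), ∀ i, ρ i = hH.eigenvalues (σ i))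
    (i : Fin d → Fin N) :
    ((d : ℝ) ^ k)⁻¹ *
        (∑ j, 4 * Real.sin (Real.pi * ((((i j : ℕ) - (k + 1) : ℕ)) : ℝ) / (2 * N)) ^ 2) ^ (k + 1)
      ≤ ∑ j, ρ (i j) := by
  obtain ⟨σ, hσ⟩ := hperm
  have huni : ∀ j : Fin d, alphaF N ((i j : ℕ) - (k + 1)) ^ (k + 1) ≤ ρ (i j) := fun j =>
    univar k hN hH ρ hmono σ hσ (i j)
  have hpow : (∑ j : Fin d, alphaF N ((i j : ℕ) - (k + 1))) ^ (k + 1) / (d : ℝ) ^ k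
      ≤ ∑ j : Fin d, alphaF N ((i j : ℕ) - (k + 1)) ^ (k + 1) := by
    have h := pow_sum_div_card_le_sum_pow (s := Finset.univ)
      (f := fun j : Fin d => alphaF N ((i j : ℕ) - (k + 1)))
      (fun j _ => alphaF_nonneg N _) k
    simpa using h
  have hgoal : ((d : ℝ) ^ k)⁻¹ *
      (∑ j : Fin d, alphaF N ((i j : ℕ) - (k + 1))) ^ (k + 1) ≤ ∑ j, ρ (i j) := by
    calc ((d : ℝ) ^ k)⁻¹ * (∑ j : Fin d, alphaF N ((i j : ℕ) - (k + 1))) ^ (k + 1)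
        = (∑ j : Fin d, alphaF N ((i j : ℕ) - (k + 1))) ^ (k + 1) / (d : ℝ) ^ k := by
          rw [div_eq_mul_inv]; ring
      _ ≤ ∑ j : Fin d, alphaF N ((i j : ℕ) - (k + 1)) ^ (k + 1) := hpow
      _ ≤ ∑ j, ρ (i j) := Finset.sum_le_sum fun j _ => huni j
  exact hgoal
end
end
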